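/- arXiv:2312.12843 — 8 statements merged into one kernel-verified Lean document; each statement's English description precedes it below -/
import Mathlib

section
/- Let Γ1 be a signed graph on n1 vertices and Γ2 a signed graph on n2 vertices with adjacency matrix A2. Then tr(|A(Γ1⊛Γ2)|³) = n1 · tr(|A2|³) + 3·n1·Σ_{i,j} |A2(i,j)|; equivalently, the number of triangles in the underlying graph of Γ1⊛Γ2 equals n1·(t(Γ2) + |E2|), where t(Γ2) is the number of triangles and |E2| the number of edges of the underlying graph of Γ2. -/
/-!
Taking absolute values commutes with the block structure, so `|A(Γ₁⊛Γ₂)|` is again a corona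
matrix, now with all markings equal to `1`. For a `2 × 2` block matrix `[[A, B], [C, D]]`,
cyclicity of the trace gives `tr M³ = tr A³ + 3 tr(ABC) + 3 tr(BDC) + tr D³`. The first diagonal
block `[[0, P], [P, 0]]` is bipartite, so it and every closed walk through it contribute nothing;
what remains is `tr((A₂ ⊗ I)³) = n₁ tr A₂³` and the cross term `tr(Q (A₂ ⊗ I) Qᵀ)`, which is
computed from `QᵀQ = μ₂μ₂ᵀ ⊗ diag(μ₁²)`.
-/

open Matrix Kronecker BigOperators

/-- The block `μ₂ᵀ ⊗ Φ₁`, where `Φ₁ = diag μ₁` and `μ₂` is regarded as an `n₂×1`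
column vector: an `n₁ × (n₂·n₁)` matrix. -/
noncomputable def muBlock {n1 n2 : ℕ} (μ1 : Fin n1 → ℝ) (μ2 : Fin n2 → ℝ) :
    Matrix (Fin n1) (Fin n2 × Fin n1) ℝ :=
  Matrix.of fun i jk => μ2 jk.1 * Matrix.diagonal μ1 i jk.2

/-- Adjacency matrix of the duplication add vertex corona `Γ₁ ⊛ Γ₂`, in `3×3` block form
`[[0, A₁μ, 0], [A₁μ, 0, μ₂ᵀ⊗Φ₁], [0, μ₂⊗Φ₁, A₂⊗I]]` (blocks of sizes `n₁, n₁, n₁·n₂`),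
where `A₁μ = Φ₁·|A₁|·Φ₁` is supplied as a parameter. -/
noncomputable def coronaStar {n1 n2 : ℕ} (A1μ : Matrix (Fin n1) (Fin n1) ℝ)
    (A2 : Matrix (Fin n2) (Fin n2) ℝ) (μ1 : Fin n1 → ℝ) (μ2 : Fin n2 → ℝ) :
    Matrix ((Fin n1 ⊕ Fin n1) ⊕ Fin n2 × Fin n1)
      ((Fin n1 ⊕ Fin n1) ⊕ Fin n2 × Fin n1) ℝ :=
  Matrix.fromBlocks
    (Matrix.fromBlocks 0 A1μ A1μ 0)
    (Matrix.fromRows (0 : Matrix (Fin n1) (Fin n2 × Fin n1) ℝ) (muBlock μ1 μ2))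
    (Matrix.fromCols (0 : Matrix (Fin n2 × Fin n1) (Fin n1) ℝ) (muBlock μ1 μ2)ᵀ)
    (A2 ⊗ₖ (1 : Matrix (Fin n1) (Fin n1) ℝ))

namespace Matrix

variable {l m n p R : Type*}

theorem trace_fromBlocks [Fintype l] [Fintype m] [AddCommMonoid R] (A : Matrix l l R)
    (B : Matrix l m R) (C : Matrix m l R) (D : Matrix m m R) :
    (fromBlocks A B C D).trace = A.trace + D.trace := by
  simp [trace, Fintype.sum_sum_type]

theorem trace_fromBlocks_pow_three [Fintype l] [Fintype m] [DecidableEq l] [DecidableEq m]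
    [CommSemiring R] (A : Matrix l l R) (B : Matrix l m R) (C : Matrix m l R) (D : Matrix m m R) :
    (fromBlocks A B C D ^ 3).trace =
      (A ^ 3).trace + 3 * (A * B * C).trace + 3 * (B * D * C).trace + (D ^ 3).trace := by
  simp only [pow_three, fromBlocks_multiply, trace_fromBlocks, Matrix.mul_add, trace_add,
    ← Matrix.mul_assoc]
  rw [trace_mul_cycle C A B, trace_mul_cycle B C A, trace_mul_cycle C B D,
    trace_mul_cycle D C B]
  ring

theorem kronecker_one_pow [Fintype l] [Fintype m] [DecidableEq l] [DecidableEq m]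
    [CommSemiring R] (A : Matrix l l R) (p : ℕ) : (A ⊗ₖ (1 : Matrix m m R)) ^ p = (A ^ p) ⊗ₖ (1 : Matrix m m R) := by
  induction p with
  | zero => simp
  | succ p ih => rw [pow_succ, ih, ← mul_kronecker_mul, Matrix.one_mul, pow_succ]

theorem map_abs_kronecker [CommRing R] [LinearOrder R] [IsStrictOrderedRing R]
    (A : Matrix l m R) (B : Matrix n p R) : (A ⊗ₖ B).map abs = A.map abs ⊗ₖ B.map abs := by
  ext
  simp [abs_mul]

end Matrix

theorem muBlock_transpose_mul_muBlock {n1 n2 : ℕ} (μ1 : Fin n1 → ℝ) (μ2 : Fin n2 → ℝ) :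
    (muBlock μ1 μ2)ᵀ * muBlock μ1 μ2 = vecMulVec μ2 μ2 ⊗ₖ diagonal (μ1 * μ1) := by
  ext ⟨j, k⟩ ⟨j', k'⟩
  rcases eq_or_ne k k' with rfl | hkk'
  · simp [muBlock, mul_apply, diagonal_apply, vecMulVec_apply]
    ring
  · simp [muBlock, mul_apply, diagonal_apply, hkk', hkk'.symm]

theorem trace_muBlock_mul_kronecker_one_mul_transpose {n1 n2 : ℕ} (μ1 : Fin n1 → ℝ)
    (μ2 : Fin n2 → ℝ) (A : Matrix (Fin n2) (Fin n2) ℝ) :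
    (muBlock μ1 μ2 * (A ⊗ₖ (1 : Matrix (Fin n1) (Fin n1) ℝ)) * (muBlock μ1 μ2)ᵀ).trace =
      (μ1 ⬝ᵥ μ1) * (μ2 ⬝ᵥ A *ᵥ μ2) := by
  rw [trace_mul_cycle, muBlock_transpose_mul_muBlock, ← mul_kronecker_mul, trace_kronecker,
    vecMulVec_mul, trace_vecMulVec, Matrix.mul_one, trace_diagonal, dotProduct_comm,
    ← dotProduct_mulVec, mul_comm]
  rfl

theorem trace_coronaStar_pow_three {n1 n2 : ℕ} (A1μ : Matrix (Fin n1) (Fin n1) ℝ)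
    (A2 : Matrix (Fin n2) (Fin n2) ℝ) (μ1 : Fin n1 → ℝ) (μ2 : Fin n2 → ℝ) :
    (coronaStar A1μ A2 μ1 μ2 ^ 3).trace =
      n1 * (A2 ^ 3).trace + 3 * (μ1 ⬝ᵥ μ1) * (μ2 ⬝ᵥ A2 *ᵥ μ2) := by
  set Q := muBlock μ1 μ2
  set D := A2 ⊗ₖ (1 : Matrix (Fin n1) (Fin n1) ℝ)
  have h_bipartite : (fromBlocks 0 A1μ A1μ 0 ^ 3).trace = 0 := by
    simp [trace_fromBlocks_pow_three]
  have h_through_bipartite : (fromBlocks 0 A1μ A1μ 0 * fromRows (0 : Matrix (Fin n1) _ ℝ) Q *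
      fromCols (0 : Matrix _ (Fin n1) ℝ) Qᵀ).trace = 0 := by
    rw [Matrix.mul_assoc, fromRows_mul_fromCols]
    simp [fromBlocks_multiply, trace_fromBlocks]
  have h_cross : (fromRows (0 : Matrix (Fin n1) _ ℝ) Q * D *
      fromCols (0 : Matrix _ (Fin n1) ℝ) Qᵀ).trace = (μ1 ⬝ᵥ μ1) * (μ2 ⬝ᵥ A2 *ᵥ μ2) := by
    rw [fromRows_mul, fromRows_mul_fromCols]
    simpa [trace_fromBlocks] using trace_muBlock_mul_kronecker_one_mul_transpose μ1 μ2 A2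
  have h_kronecker : (D ^ 3).trace = n1 * (A2 ^ 3).trace := by
    rw [kronecker_one_pow, trace_kronecker, trace_one, Fintype.card_fin, mul_comm]
  rw [coronaStar, trace_fromBlocks_pow_three, h_bipartite, h_through_bipartite, h_cross,
    h_kronecker]
  ring

theorem muBlock_map_abs {n1 n2 : ℕ} (μ1 : Fin n1 → ℝ) (μ2 : Fin n2 → ℝ) :
    (muBlock μ1 μ2).map abs = muBlock (fun i => |μ1 i|) (fun j => |μ2 j|) := by
  ext i ⟨j, k⟩
  simp [muBlock, diagonal_apply, abs_mul, apply_ite abs]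

theorem coronaStar_map_abs {n1 n2 : ℕ} (A1μ : Matrix (Fin n1) (Fin n1) ℝ)
    (A2 : Matrix (Fin n2) (Fin n2) ℝ) (μ1 : Fin n1 → ℝ) (μ2 : Fin n2 → ℝ) :
    (coronaStar A1μ A2 μ1 μ2).map abs =
      coronaStar (A1μ.map abs) (A2.map abs) (fun i => |μ1 i|) (fun j => |μ2 j|) := by
  rw [coronaStar, coronaStar, fromBlocks_map, fromBlocks_map, fromRows_map, fromCols_map,
    transpose_map, muBlock_map_abs, map_abs_kronecker, Matrix.map_one abs abs_zero abs_one]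
  simp

theorem corona_triangle_count_general (n1 n2 : ℕ)
    (A1 : Matrix (Fin n1) (Fin n1) ℝ)
    (μ1 : Fin n1 → ℝ) (hμ1 : ∀ i, μ1 i = 1 ∨ μ1 i = -1)
    (A2 : Matrix (Fin n2) (Fin n2) ℝ)
    (μ2 : Fin n2 → ℝ) (hμ2 : ∀ i, μ2 i = 1 ∨ μ2 i = -1) :
    Matrix.trace
        (((coronaStar (Matrix.diagonal μ1 * A1.map abs * Matrix.diagonal μ1) A2 μ1 μ2).map
            abs) ^ 3)
      = (n1 : ℝ) * Matrix.trace ((A2.map abs) ^ 3)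
        + 3 * (n1 : ℝ) * ∑ i, ∑ j, |A2 i j| := by
  have hμ1_abs : (fun i => |μ1 i|) = 1 := funext fun i => (abs_eq zero_le_one).2 (hμ1 i)
  have hμ2_abs : (fun j => |μ2 j|) = 1 := funext fun j => (abs_eq zero_le_one).2 (hμ2 j)
  rw [coronaStar_map_abs, trace_coronaStar_pow_three, hμ1_abs, hμ2_abs, one_dotProduct_one, one_dotProduct, Fintype.card_fin]
  simp only [mulVec, dotProduct_one, map_apply]

/-- `tr(|A(Γ₁⊛Γ₂)|³) = n₁·tr(|A₂|³) + 3·n₁·Σ_{i,j}|A₂(i,j)|`; equivalently,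
the number of triangles of the underlying graph of `Γ₁⊛Γ₂` is `n₁·(t(Γ₂)+|E₂|)`. -/
theorem corona_triangle_count (n1 n2 : ℕ)
    (A1 : Matrix (Fin n1) (Fin n1) ℝ) (hA1sym : A1.IsSymm) (hA1diag : ∀ i, A1 i i = 0)
    (hA1ent : ∀ i j, A1 i j = 1 ∨ A1 i j = 0 ∨ A1 i j = -1)
    (μ1 : Fin n1 → ℝ) (hμ1 : ∀ i, μ1 i = 1 ∨ μ1 i = -1)
    (A2 : Matrix (Fin n2) (Fin n2) ℝ) (hA2sym : A2.IsSymm) (hA2diag : ∀ i, A2 i i = 0)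
    (hA2ent : ∀ i j, A2 i j = 1 ∨ A2 i j = 0 ∨ A2 i j = -1)
    (μ2 : Fin n2 → ℝ) (hμ2 : ∀ i, μ2 i = 1 ∨ μ2 i = -1) :
    Matrix.trace
        (((coronaStar (Matrix.diagonal μ1 * A1.map abs * Matrix.diagonal μ1) A2 μ1 μ2).map
            abs) ^ 3)
      = (n1 : ℝ) * Matrix.trace ((A2.map abs) ^ 3)
        + 3 * (n1 : ℝ) * ∑ i, ∑ j, |A2 i j| :=
  corona_triangle_count_general n1 n2 A1 μ1 hμ1 A2 μ2 hμ2
end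

section
/- Let Γ1 (on n1 ≥ 1 vertices) and Γ2 be balanced signed graphs with markings μ1 and μ2 (Φ2 = diag(μ2)). Then Γ1⊛Γ2 is unbalanced if and only if A2 ≠ Φ2·|A2|·Φ2, i.e., if and only if Γ2 contains a positive edge joining two oppositely marked vertices, or a negative edge joining two positively marked vertices, or a negative edge joining two negatively marked vertices. -/
/-!
If `μ₂` switches `A₂` to `|A₂|`, then switching `Γ₁ ⊛ Γ₂` at `(μ₁, μ₁, μ₂ ⊗ 1)` turns it into the
corona of `|A₁|` and `|A₂|` with trivial markings, which has no negative edge. Conversely, let `ε`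
balance `Γ₁ ⊛ Γ₂` and fix a vertex `i` of `Γ₁`. Its duplicate is joined to each vertex `(j, i)` of
the `i`-th copy of `Γ₂` by an edge of sign `μ₂ j * μ₁ i`, so balance on these edges gives
`ε (j, i) = ±μ₂ j` with a sign independent of `j`; balance on the copy then says that `μ₂`
switches `A₂` to `|A₂|`.
-/

open Matrix Kronecker BigOperators

/-- A signed graph with sign matrix `M` is balanced if some `±1` diagonal switching turns
`M` into the entrywise absolute value `|M|`. -/
def IsBalanced {V : Type} [Fintype V] [DecidableEq V] (M : Matrix V V ℝ) : Prop :=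
  ∃ ε : V → ℝ, (∀ v, ε v = 1 ∨ ε v = -1) ∧
    Matrix.diagonal ε * M * Matrix.diagonal ε = M.map abs

theorem abs_eq_one_of_mul_self_eq_one {R : Type*} [Ring R] [LinearOrder R] [IsStrictOrderedRing R]
    {x : R} (h : x * x = 1) : |x| = 1 := by
  rcases mul_self_eq_one_iff.1 h with rfl | rfl <;> simp

theorem eq_mul_mul_iff_mul_mul_eq {M : Type*} [Monoid M] {d a b : M} (hd : d * d = 1) :
    a = d * b * d ↔ d * a * d = b := by
  have hcancel : ∀ x, d * (d * x * d) * d = x := fun x => by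
    rw [← mul_assoc, ← mul_assoc, hd, one_mul, mul_assoc, hd, mul_one]
  exact ⟨fun h => h ▸ hcancel b, fun h => h ▸ (hcancel a).symm⟩

def Balances {V : Type} [Fintype V] [DecidableEq V] (ε : V → ℝ) (M : Matrix V V ℝ) : Prop :=
  diagonal ε * M * diagonal ε = M.map abs

section Switching

variable {V W : Type} [Fintype V] [DecidableEq V] [Fintype W] [DecidableEq W]

theorem balances_iff {ε : V → ℝ} {M : Matrix V V ℝ} :
    Balances ε M ↔ ∀ i j, ε i * M i j * ε j = |M i j| := by
  simp only [Balances, ← Matrix.ext_iff, mul_diagonal, diagonal_mul, map_apply]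

theorem balances_iff_eq {ε : V → ℝ} (hε : ∀ v, ε v * ε v = 1) {M : Matrix V V ℝ} :
    Balances ε M ↔ M = diagonal ε * M.map abs * diagonal ε := by
  refine (eq_mul_mul_iff_mul_mul_eq ?_).symm
  rw [diagonal_mul_diagonal, funext hε, diagonal_one]

theorem balances_mul_const_iff {ε : V → ℝ} {c : ℝ} (hc : c * c = 1) {M : Matrix V V ℝ} :
    Balances (fun v => ε v * c) M ↔ Balances ε M := by
  simp only [balances_iff]
  refine forall₂_congr fun i j => ?_
  rw [show ε i * c * M i j * (ε j * c) = ε i * M i j * ε j * (c * c) by ring, hc, mul_one]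

theorem Balances.submatrix_of_cone {ε : V → ℝ} (hε : ∀ v, ε v * ε v = 1) {M : Matrix V V ℝ}
    (h : Balances ε M) {σ : W → ℝ} (hσ : ∀ j, σ j * σ j = 1) (a : V) (f : W → V)
    (hcone : ∀ j, M a (f j) = σ j) : Balances σ (M.submatrix f f) := by
  rw [balances_iff] at h ⊢
  have hσε : ∀ j, σ j = ε a * ε (f j) := by
    intro j
    have hj := h a (f j)
    rw [hcone, abs_eq_one_of_mul_self_eq_one (hσ j)] at hj
    linear_combination (ε a * ε (f j)) * hj - σ j * ε a * ε a * hε (f j) - σ j * hε a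
  intro j k
  simp only [submatrix_apply, hσε]
  linear_combination ε a * ε a * h (f j) (f k) + |M (f j) (f k)| * hε a

theorem isBalanced_diagonal_mul_mul_diagonal {ε : V → ℝ} (hε : ∀ v, ε v = 1 ∨ ε v = -1)
    {N : Matrix V V ℝ} (hN : ∀ i j, 0 ≤ N i j) :
    IsBalanced (diagonal ε * N * diagonal ε) := by
  refine ⟨ε, hε, balances_iff.2 fun i j => ?_⟩
  have hsq : ∀ v, ε v * ε v = 1 := fun v => mul_self_eq_one_iff.2 (hε v)
  have habs : ∀ v, |ε v| = 1 := fun v => abs_eq_one_of_mul_self_eq_one (hsq v)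
  simp only [mul_diagonal, diagonal_mul, abs_mul, habs, abs_of_nonneg (hN i j)]
  linear_combination N i j * ε j * ε j * hsq i + N i j * hsq j

end Switching

section Corona

variable {n1 n2 : ℕ}

def coronaMarking (μ1 : Fin n1 → ℝ) (μ2 : Fin n2 → ℝ) : (Fin n1 ⊕ Fin n1) ⊕ Fin n2 × Fin n1 → ℝ :=
  Sum.elim (Sum.elim μ1 μ1) fun p => μ2 p.1

theorem coronaMarking_eq_one_or_eq_neg_one {μ1 : Fin n1 → ℝ} {μ2 : Fin n2 → ℝ}
    (hμ1 : ∀ i, μ1 i = 1 ∨ μ1 i = -1) (hμ2 : ∀ j, μ2 j = 1 ∨ μ2 j = -1) :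
    ∀ v, coronaMarking μ1 μ2 v = 1 ∨ coronaMarking μ1 μ2 v = -1
  | .inl (.inl i) => hμ1 i
  | .inl (.inr i) => hμ1 i
  | .inr p => hμ2 p.1

variable (A1μ : Matrix (Fin n1) (Fin n1) ℝ) (A2 : Matrix (Fin n2) (Fin n2) ℝ)
  (μ1 : Fin n1 → ℝ) (μ2 : Fin n2 → ℝ)

theorem coronaStar_apply_inl_inr_inr_self (i : Fin n1) (j : Fin n2) :
    coronaStar A1μ A2 μ1 μ2 (.inl (.inr i)) (.inr (j, i)) = μ2 j * μ1 i := by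
  simp [coronaStar, muBlock]

theorem coronaStar_submatrix_inr_self (i : Fin n1) :
    (coronaStar A1μ A2 μ1 μ2).submatrix (fun j => .inr (j, i)) (fun j => .inr (j, i)) = A2 := by
  ext j k
  simp [coronaStar]

theorem coronaStar_diagonal_mul_mul_diagonal (B1 : Matrix (Fin n1) (Fin n1) ℝ)
    (B2 : Matrix (Fin n2) (Fin n2) ℝ) :
    coronaStar (diagonal μ1 * B1 * diagonal μ1) (diagonal μ2 * B2 * diagonal μ2) μ1 μ2 =
      diagonal (coronaMarking μ1 μ2) * coronaStar B1 B2 1 1 *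
        diagonal (coronaMarking μ1 μ2) := by
  ext ((i | i) | ⟨j, i⟩) ((k | k) | ⟨l, k⟩) <;>
    simp [coronaStar, muBlock, coronaMarking, diagonal_apply, one_apply, mul_comm]

theorem coronaStar_one_one_nonneg {B1 : Matrix (Fin n1) (Fin n1) ℝ}
    {B2 : Matrix (Fin n2) (Fin n2) ℝ} (hB1 : ∀ i j, 0 ≤ B1 i j) (hB2 : ∀ i j, 0 ≤ B2 i j) :
    ∀ a b, 0 ≤ coronaStar B1 B2 1 1 a b := by
  rintro ((i | i) | ⟨j, i⟩) ((k | k) | ⟨l, k⟩) <;>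
    simp [coronaStar, muBlock, one_apply, hB1, ite_nonneg, hB2]

end Corona

theorem corona_unbalanced_iff_general (n1 n2 : ℕ) (hn1 : 1 ≤ n1)
    (A1 : Matrix (Fin n1) (Fin n1) ℝ)
    (μ1 : Fin n1 → ℝ) (hμ1 : ∀ i, μ1 i = 1 ∨ μ1 i = -1)
    (A2 : Matrix (Fin n2) (Fin n2) ℝ)
    (μ2 : Fin n2 → ℝ) (hμ2 : ∀ i, μ2 i = 1 ∨ μ2 i = -1) :
    ¬ IsBalanced
        (coronaStar (Matrix.diagonal μ1 * A1.map abs * Matrix.diagonal μ1) A2 μ1 μ2)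
      ↔ A2 ≠ Matrix.diagonal μ2 * A2.map abs * Matrix.diagonal μ2 := by
  have hμ1sq : ∀ i, μ1 i * μ1 i = 1 := fun i => mul_self_eq_one_iff.2 (hμ1 i)
  have hμ2sq : ∀ j, μ2 j * μ2 j = 1 := fun j => mul_self_eq_one_iff.2 (hμ2 j)
  rw [Ne, not_iff_not, ← balances_iff_eq hμ2sq]
  constructor
  · rintro ⟨ε, hε, hbal⟩
    let i : Fin n1 := ⟨0, hn1⟩
    have hcone := Balances.submatrix_of_cone (fun v => mul_self_eq_one_iff.2 (hε v)) hbal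
      (σ := fun j => μ2 j * μ1 i) (fun j => by linear_combination hμ1sq i * μ2 j * μ2 j + hμ2sq j)
      (.inl (.inr i)) (fun j => .inr (j, i)) (coronaStar_apply_inl_inr_inr_self _ A2 μ1 μ2 i)
    rw [coronaStar_submatrix_inr_self] at hcone
    exact (balances_mul_const_iff (hμ1sq i)).1 hcone
  · intro h
    rw [(balances_iff_eq hμ2sq).1 h, coronaStar_diagonal_mul_mul_diagonal]
    exact isBalanced_diagonal_mul_mul_diagonal (coronaMarking_eq_one_or_eq_neg_one hμ1 hμ2)
      (coronaStar_one_one_nonneg (fun _ _ => abs_nonneg _) (fun _ _ => abs_nonneg _))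

/-- If `Γ₁` (on `n₁ ≥ 1` vertices) and `Γ₂` are balanced, then `Γ₁⊛Γ₂` is
unbalanced if and only if `A₂ ≠ Φ₂·|A₂|·Φ₂`, i.e. iff `Γ₂` contains a positive edge joining
oppositely marked vertices, or a negative edge joining two positively marked vertices, or a
negative edge joining two negatively marked vertices. -/
theorem corona_unbalanced_iff (n1 n2 : ℕ) (hn1 : 1 ≤ n1)
    (A1 : Matrix (Fin n1) (Fin n1) ℝ) (hA1sym : A1.IsSymm) (hA1diag : ∀ i, A1 i i = 0)
    (hA1ent : ∀ i j, A1 i j = 1 ∨ A1 i j = 0 ∨ A1 i j = -1)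
    (μ1 : Fin n1 → ℝ) (hμ1 : ∀ i, μ1 i = 1 ∨ μ1 i = -1)
    (A2 : Matrix (Fin n2) (Fin n2) ℝ) (hA2sym : A2.IsSymm) (hA2diag : ∀ i, A2 i i = 0)
    (hA2ent : ∀ i j, A2 i j = 1 ∨ A2 i j = 0 ∨ A2 i j = -1)
    (μ2 : Fin n2 → ℝ) (hμ2 : ∀ i, μ2 i = 1 ∨ μ2 i = -1)
    (hbal1 : IsBalanced A1) (hbal2 : IsBalanced A2) :
    ¬ IsBalanced
        (coronaStar (Matrix.diagonal μ1 * A1.map abs * Matrix.diagonal μ1) A2 μ1 μ2)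
      ↔ A2 ≠ Matrix.diagonal μ2 * A2.map abs * Matrix.diagonal μ2 :=
  corona_unbalanced_iff_general n1 n2 hn1 A1 μ1 hμ1 A2 μ2 hμ2
end

section
/- Let Γ1 be a signed graph on n1 vertices with adjacency matrix A1 and marking μ1, and Γ2 a signed graph on n2 vertices with adjacency matrix A2 and marking μ2. Then for every real x such that x·I_{n2} − A2 is invertible, det(x·I − A(Γ1⊛Γ2)) = det(x·I_{n2} − A2)^{n1} · det( (x² − x·χ_{A2}(x))·I_{n1} − A_{1μ}² ). Equivalently, the adjacency characteristic polynomial of Γ1⊛Γ2 equals ∏_{i=1}^{n2}(x − λ_{2i})^{n1} · ∏_{i=1}^{n1}(x² − x·χ_{A2}(x) − (λ'_{1i})²), where λ_{2i} are the eigenvalues of A2 and λ'_{1i} are the eigenvalues of A_{1μ}. -/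
open Matrix Kronecker BigOperators

/-- The signed `M`-coronal `χ_M(x) = μᵀ·(x·I − M)⁻¹·μ`. -/
noncomputable def coronal {V : Type} [Fintype V] [DecidableEq V]
    (M : Matrix V V ℝ) (μ : V → ℝ) (x : ℝ) : ℝ :=
  μ ⬝ᵥ ((x • (1 : Matrix V V ℝ) - M)⁻¹ *ᵥ μ)

/-!
Take the Schur complement of `x·I − A(Γ₁⊛Γ₂)` with respect to its invertible last block
`(x·I − A₂) ⊗ I`. Since `Φ₁² = I`, the correction term `(μ₂ᵀ ⊗ Φ₁)((x·I − A₂)⁻¹ ⊗ I)(μ₂ ⊗ Φ₁)`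
collapses to `χ_{A₂}(x)·I`, leaving the `2×2` block matrix `[[x·I, −A₁μ], [−A₁μ, (x − χ)·I]]`.
Its lower blocks commute, so its determinant is `det(x(x − χ)·I − A₁μ²)`, also when `x = 0`.
-/

namespace Matrix

open Polynomial
variable {n R : Type*} [Fintype n] [DecidableEq n] [CommRing R]

theorem det_fromBlocks_mul_det_of_commute (A B C D : Matrix n n R) (hCD : Commute C D) :
    (fromBlocks A B C D).det * D.det = (A * D - B * C).det * D.det := by
  have hprod : fromBlocks A B C D * fromBlocks D 0 (-C) 1 = fromBlocks (A * D - B * C) B 0 D := by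
    rw [fromBlocks_multiply, hCD.eq]
    simp [sub_eq_add_neg]
  simpa [det_fromBlocks_zero₁₂, det_fromBlocks_zero₂₁] using congrArg det hprod

/- `charmatrix (-D) = X·I + D` has monic determinant, a non-zero-divisor of `R[X]` that can be
cancelled; then evaluate at `X = 0`. -/
theorem det_fromBlocks_of_commute (A B C D : Matrix n n R) (hCD : Commute C D) :
    (fromBlocks A B C D).det = (A * D - B * C).det := by
  let φ := (Polynomial.C : R →+* R[X]).mapMatrix (m := n)
  let ψ := (evalRingHom (0 : R)).mapMatrix (m := n)
  have hCD' : Commute (φ C) (charmatrix (-D)) := by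
    refine Commute.sub_right (scalar_commute _ (Commute.all _) _).symm ?_
    rw [map_neg]
    exact (hCD.map φ).neg_right
  have hpoly := (mul_cancel_right_mem_nonZeroDivisors (charpoly_monic (-D)).mem_nonZeroDivisors).1
    (det_fromBlocks_mul_det_of_commute (φ A) (φ B) (φ C) _ hCD')
  have hψD : ψ (charmatrix (-D)) = D := by
    ext i j
    by_cases h : i = j <;> simp [ψ, charmatrix, h]
  have hψφ (M : Matrix n n R) : ψ (φ M) = M := by ext; simp [ψ, φ]
  have := congrArg (evalRingHom 0) hpoly
  rw [RingHom.map_det, RingHom.map_det, RingHom.mapMatrix_apply, fromBlocks_map] at this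
  change (fromBlocks (ψ (φ A)) (ψ (φ B)) (ψ (φ C)) (ψ (charmatrix (-D)))).det = (ψ _).det at this
  simpa only [map_sub, map_mul, hψD, hψφ] using this

end Matrix

section Corona
variable {n1 n2 : ℕ}

theorem muBlock_mul_kronecker_one (μ1 : Fin n1 → ℝ) (μ2 : Fin n2 → ℝ)
    (M : Matrix (Fin n2) (Fin n2) ℝ) :
    muBlock μ1 μ2 * (M ⊗ₖ (1 : Matrix (Fin n1) (Fin n1) ℝ)) = muBlock μ1 (μ2 ᵥ* M) := by
  ext i ⟨r, k⟩
  simp only [muBlock, diagonal_apply, mul_ite, mul_zero, mul_apply, of_apply, kroneckerMap_apply,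
    one_apply, mul_one, ite_mul, zero_mul, Fintype.sum_prod_type, Finset.sum_ite_eq',
    Finset.mem_univ, ↓reduceIte, Finset.sum_ite_irrel, Finset.sum_const_zero, vecMul, dotProduct,
    Finset.sum_mul]
  exact if_congr Iff.rfl (Finset.sum_congr rfl fun _ _ => by ring) rfl

theorem muBlock_mul_muBlock_transpose (μ1 : Fin n1 → ℝ) (ν μ2 : Fin n2 → ℝ) :
    muBlock μ1 ν * (muBlock μ1 μ2)ᵀ = (ν ⬝ᵥ μ2) • diagonal (μ1 * μ1) := by
  ext i j
  simp only [muBlock, diagonal_apply, mul_ite, mul_zero, mul_apply, of_apply, transpose_apply,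
    ite_mul, zero_mul, Fintype.sum_prod_type, Finset.sum_ite_eq, Finset.mem_univ, ↓reduceIte,
    Finset.sum_ite_irrel, Finset.sum_const_zero, dotProduct, Matrix.smul_apply, Pi.mul_apply,
    smul_eq_mul]
  split_ifs with h
  · subst h
    rw [Finset.sum_mul]
    exact Finset.sum_congr rfl fun _ _ => by ring
  · rfl

theorem smul_one_sub_coronaStar (B : Matrix (Fin n1) (Fin n1) ℝ) (A2 : Matrix (Fin n2) (Fin n2) ℝ)
    (μ1 : Fin n1 → ℝ) (μ2 : Fin n2 → ℝ) (x : ℝ) :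
    x • 1 - coronaStar B A2 μ1 μ2 =
      fromBlocks (fromBlocks (x • 1) (-B) (-B) (x • 1)) (fromRows 0 (-muBlock μ1 μ2))
        (fromCols 0 (-(muBlock μ1 μ2)ᵀ)) ((x • 1 - A2) ⊗ₖ (1 : Matrix (Fin n1) (Fin n1) ℝ)) := by
  ext ((i | i) | ⟨i, k⟩) ((j | j) | ⟨j, l⟩)
  case inr.inr => by_cases hkl : k = l <;> simp [coronaStar, one_apply, hkl]
  all_goals simp [coronaStar, one_apply]

theorem det_smul_one_sub_coronaStar (B : Matrix (Fin n1) (Fin n1) ℝ)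
    (A2 : Matrix (Fin n2) (Fin n2) ℝ) (μ1 : Fin n1 → ℝ) (hμ1 : μ1 * μ1 = 1) (μ2 : Fin n2 → ℝ)
    (x : ℝ) (hx : IsUnit (x • (1 : Matrix (Fin n2) (Fin n2) ℝ) - A2).det) :
    (x • 1 - coronaStar B A2 μ1 μ2).det =
      (x • (1 : Matrix (Fin n2) (Fin n2) ℝ) - A2).det ^ n1 *
        ((x ^ 2 - x * coronal A2 μ2 x) • (1 : Matrix (Fin n1) (Fin n1) ℝ) - B ^ 2).det := by
  set S := x • (1 : Matrix (Fin n2) (Fin n2) ℝ) - A2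
  have hdetS : (S ⊗ₖ (1 : Matrix (Fin n1) (Fin n1) ℝ)).det = S.det ^ n1 := by
    rw [det_kronecker, det_one, one_pow, mul_one, Fintype.card_fin]
  let _ : Invertible (S ⊗ₖ (1 : Matrix (Fin n1) (Fin n1) ℝ)) :=
    invertibleOfIsUnitDet _ (hdetS ▸ hx.pow n1)
  have hschur :
      fromRows (0 : Matrix (Fin n1) (Fin n2 × Fin n1) ℝ) (-muBlock μ1 μ2) *
          ⅟(S ⊗ₖ (1 : Matrix (Fin n1) (Fin n1) ℝ)) *
          fromCols (0 : Matrix (Fin n2 × Fin n1) (Fin n1) ℝ) (-(muBlock μ1 μ2)ᵀ) =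
        fromBlocks 0 0 0 (coronal A2 μ2 x • 1) := by
    rw [invOf_eq_nonsing_inv, inv_kronecker, inv_one, fromRows_mul, fromRows_mul_fromCols]
    simp only [Matrix.zero_mul, Matrix.mul_zero, Matrix.neg_mul, Matrix.mul_neg, neg_neg,
      neg_zero, muBlock_mul_kronecker_one, muBlock_mul_muBlock_transpose, hμ1, diagonal_one',
      ← dotProduct_mulVec]
    rfl
  have hcomm : Commute (-B) ((x - coronal A2 μ2 x) • (1 : Matrix (Fin n1) (Fin n1) ℝ)) :=
    (Commute.one_right _).smul_right _
  rw [smul_one_sub_coronaStar, det_fromBlocks₂₂, hdetS, hschur, sub_eq_add_neg, fromBlocks_neg,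
    fromBlocks_add]
  simp only [neg_zero, add_zero, ← sub_eq_add_neg, ← sub_smul]
  rw [det_fromBlocks_of_commute _ _ _ _ hcomm, smul_mul_smul, mul_one, neg_mul_neg, mul_sub,
    ← sq, ← sq]

end Corona

theorem corona_adjacency_charpoly_general (n1 n2 : ℕ)
    (A1 : Matrix (Fin n1) (Fin n1) ℝ)
    (μ1 : Fin n1 → ℝ) (hμ1 : ∀ i, μ1 i = 1 ∨ μ1 i = -1)
    (A2 : Matrix (Fin n2) (Fin n2) ℝ)
    (μ2 : Fin n2 → ℝ)
    (x : ℝ) (hx : IsUnit (x • (1 : Matrix (Fin n2) (Fin n2) ℝ) - A2).det) :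
    (x • 1 -
        coronaStar (Matrix.diagonal μ1 * A1.map abs * Matrix.diagonal μ1) A2 μ1 μ2).det
      = (x • (1 : Matrix (Fin n2) (Fin n2) ℝ) - A2).det ^ n1 *
        ((x ^ 2 - x * coronal A2 μ2 x) • (1 : Matrix (Fin n1) (Fin n1) ℝ)
          - (Matrix.diagonal μ1 * A1.map abs * Matrix.diagonal μ1) ^ 2).det :=
  det_smul_one_sub_coronaStar _ A2 μ1
    (funext fun i => by rcases hμ1 i with h | h <;> simp [h]) μ2 x hx

/-- For every real `x` such that `x·I_{n₂} − A₂` is invertible,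
`det(x·I − A(Γ₁⊛Γ₂)) = det(x·I − A₂)^{n₁} · det((x² − x·χ_{A₂}(x))·I_{n₁} − A₁μ²)`. -/
theorem corona_adjacency_charpoly (n1 n2 : ℕ)
    (A1 : Matrix (Fin n1) (Fin n1) ℝ) (hA1sym : A1.IsSymm) (hA1diag : ∀ i, A1 i i = 0)
    (hA1ent : ∀ i j, A1 i j = 1 ∨ A1 i j = 0 ∨ A1 i j = -1)
    (μ1 : Fin n1 → ℝ) (hμ1 : ∀ i, μ1 i = 1 ∨ μ1 i = -1)
    (A2 : Matrix (Fin n2) (Fin n2) ℝ) (hA2sym : A2.IsSymm) (hA2diag : ∀ i, A2 i i = 0)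
    (hA2ent : ∀ i j, A2 i j = 1 ∨ A2 i j = 0 ∨ A2 i j = -1)
    (μ2 : Fin n2 → ℝ) (hμ2 : ∀ i, μ2 i = 1 ∨ μ2 i = -1)
    (x : ℝ) (hx : IsUnit (x • (1 : Matrix (Fin n2) (Fin n2) ℝ) - A2).det) :
    (x • 1 -
        coronaStar (Matrix.diagonal μ1 * A1.map abs * Matrix.diagonal μ1) A2 μ1 μ2).det
      = (x • (1 : Matrix (Fin n2) (Fin n2) ℝ) - A2).det ^ n1 *
        ((x ^ 2 - x * coronal A2 μ2 x) • (1 : Matrix (Fin n1) (Fin n1) ℝ)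
          - (Matrix.diagonal μ1 * A1.map abs * Matrix.diagonal μ1) ^ 2).det :=
  corona_adjacency_charpoly_general n1 n2 A1 μ1 hμ1 A2 μ2 x hx
end

section
/- Let Γ1 and Γ2 be signed graphs of the same order n with adjacency matrices A1, A2 and markings μ1, μ2 such that the μ-signed adjacency matrices Φ1·|A1|·Φ1 and Φ2·|A2|·Φ2 have the same characteristic polynomial. Then for every signed graph Γ (with marking), the adjacency matrices A(Γ1⊛Γ) and A(Γ2⊛Γ) have the same characteristic polynomial, i.e., Γ1⊛Γ and Γ2⊛Γ are A-cospectral. -/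
/-!
Both `Φ₁|A₁|Φ₁` and `Φ₂|A₂|Φ₂` are real symmetric with the same characteristic polynomial, hence
orthogonally similar: `U (Φ₁|A₁|Φ₁) Uᵀ = Φ₂|A₂|Φ₂` for an orthogonal `U`. Conjugating
`A(Γ₁ ⊛ Γ)` by the orthogonal matrix `diag(U, U, I ⊗ R)` with `R = Φ₂ U Φ₁` gives `A(Γ₂ ⊛ Γ)`:
writing the marking block as `μᵀ ⊗ Φ₁ = Φ₁ (μᵀ ⊗ I)`, it becomes `U Φ₁ Rᵀ (μᵀ ⊗ I) = Φ₂ (μᵀ ⊗ I)`,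
while `B ⊗ I` is fixed because `R Rᵀ = I`.
-/

open Matrix Kronecker BigOperators

namespace Matrix

theorem charpoly_mul_mul_of_mul_eq_one {n R : Type*} [Fintype n] [DecidableEq n] [CommRing R]
    {P Q : Matrix n n R} (h : Q * P = 1) (M : Matrix n n R) :
    (P * M * Q).charpoly = M.charpoly := by
  rw [charpoly_mul_comm, ← mul_assoc, h, one_mul]

theorem IsHermitian.exists_unitary_conj_eq_of_charpoly_eq {𝕜 n : Type*} [RCLike 𝕜] [Fintype n]
    [DecidableEq n] {A B : Matrix n n 𝕜} (hA : A.IsHermitian) (hB : B.IsHermitian)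
    (h : A.charpoly = B.charpoly) :
    ∃ U ∈ unitaryGroup n 𝕜, U * A * star U = B := by
  refine ⟨_, (hB.eigenvectorUnitary * star hA.eigenvectorUnitary).2, ?_⟩
  rw [← Unitary.conjStarAlgAut_apply (S := 𝕜), Unitary.conjStarAlgAut_mul_apply,
    hA.conjStarAlgAut_star_eigenvectorUnitary, (hA.eigenvalues_eq_eigenvalues_iff hB).2 h,
    ← hB.spectral_theorem]

theorem IsSymm.diagonal_mul_mul_diagonal {n R : Type*} [Fintype n] [DecidableEq n] [CommSemiring R]
    {A : Matrix n n R} (hA : A.IsSymm) (d : n → R) : (diagonal d * A * diagonal d).IsSymm := by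
  rw [IsSymm, transpose_mul, transpose_mul, diagonal_transpose, hA.eq, Matrix.mul_assoc]

variable {l m R : Type*} [Fintype l] [Fintype m] [DecidableEq l] [DecidableEq m] [CommRing R]

theorem fromBlocks_mem_orthogonalGroup {P : Matrix l l R} {Q : Matrix m m R}
    (hP : P ∈ orthogonalGroup l R) (hQ : Q ∈ orthogonalGroup m R) :
    fromBlocks P 0 0 Q ∈ orthogonalGroup (l ⊕ m) R := by
  rw [mem_orthogonalGroup_iff] at *
  simp [fromBlocks_transpose, fromBlocks_multiply, hP, hQ]

theorem kronecker_mem_orthogonalGroup {P : Matrix l l R} {Q : Matrix m m R}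
    (hP : P ∈ orthogonalGroup l R) (hQ : Q ∈ orthogonalGroup m R) :
    P ⊗ₖ Q ∈ orthogonalGroup (l × m) R := by
  rw [mem_orthogonalGroup_iff] at *
  rw [← kroneckerMap_transpose, ← mul_kronecker_mul, hP, hQ, one_kronecker_one]

theorem diagonal_mem_orthogonalGroup {d : l → R} (hd : ∀ i, d i = 1 ∨ d i = -1) :
    diagonal d ∈ orthogonalGroup l R := by
  rw [mem_orthogonalGroup_iff, diagonal_transpose, diagonal_mul_diagonal, ← diagonal_one]
  congr 1
  funext i
  rcases hd i with h | h <;> simp [h]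

end Matrix

section Corona

variable {n m : ℕ}

-- The ascription `(1 : Fin n → ℝ)` fixes `n` early; otherwise the product elaborates with the
-- default `CStarMatrix` multiplication instead of `Matrix.mul`.
theorem muBlock_eq_diagonal_mul (μ : Fin n → ℝ) (ν : Fin m → ℝ) :
    muBlock μ ν = diagonal μ * muBlock (1 : Fin n → ℝ) ν := by
  ext i ⟨k, j⟩
  rw [Matrix.mul_apply]
  simp [muBlock, diagonal_apply, mul_comm]

theorem muBlock_one_mul_kronecker (ν : Fin m → ℝ) (R : Matrix (Fin n) (Fin n) ℝ) :
    muBlock (1 : Fin n → ℝ) ν * ((1 : Matrix (Fin m) (Fin m) ℝ) ⊗ₖ R)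
      = R * muBlock (1 : Fin n → ℝ) ν := by
  ext i ⟨k, j⟩
  rw [Matrix.mul_apply, Matrix.mul_apply]
  simp [muBlock, Matrix.one_apply, Fintype.sum_prod_type, diagonal_apply, mul_comm]

noncomputable def coronaConj (m : ℕ) (U R : Matrix (Fin n) (Fin n) ℝ) :
    Matrix ((Fin n ⊕ Fin n) ⊕ Fin m × Fin n) ((Fin n ⊕ Fin n) ⊕ Fin m × Fin n) ℝ :=
  fromBlocks (fromBlocks U 0 0 U) 0 0 ((1 : Matrix (Fin m) (Fin m) ℝ) ⊗ₖ R)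

theorem coronaConj_mem_orthogonalGroup {U R : Matrix (Fin n) (Fin n) ℝ}
    (hU : U ∈ orthogonalGroup (Fin n) ℝ) (hR : R ∈ orthogonalGroup (Fin n) ℝ) :
    coronaConj m U R ∈ orthogonalGroup _ ℝ :=
  fromBlocks_mem_orthogonalGroup (fromBlocks_mem_orthogonalGroup hU hU)
    (kronecker_mem_orthogonalGroup (one_mem _) hR)

theorem coronaConj_mul_coronaStar_mul_transpose (U R A : Matrix (Fin n) (Fin n) ℝ)
    (B : Matrix (Fin m) (Fin m) ℝ) (μ₁ μ₂ : Fin n → ℝ) (ν : Fin m → ℝ)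
    (hR : R * Rᵀ = 1) (hμ : U * diagonal μ₁ * Rᵀ = diagonal μ₂) :
    coronaConj m U R * coronaStar A B μ₁ ν * (coronaConj m U R)ᵀ
      = coronaStar (U * A * Uᵀ) B μ₂ ν := by
  have hK : ((1 : Matrix (Fin m) (Fin m) ℝ) ⊗ₖ R)ᵀ = 1 ⊗ₖ Rᵀ := by
    rw [← kroneckerMap_transpose, transpose_one]
  have hmu : U * muBlock μ₁ ν * ((1 : Matrix (Fin m) (Fin m) ℝ) ⊗ₖ R)ᵀ = muBlock μ₂ ν := by
    rw [hK, muBlock_eq_diagonal_mul, Matrix.mul_assoc, Matrix.mul_assoc,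
      muBlock_one_mul_kronecker, ← Matrix.mul_assoc, ← Matrix.mul_assoc, hμ,
      ← muBlock_eq_diagonal_mul]
  have hmuT : ((1 : Matrix (Fin m) (Fin m) ℝ) ⊗ₖ R) * (muBlock μ₁ ν)ᵀ * Uᵀ = (muBlock μ₂ ν)ᵀ := by
    rw [← hmu, transpose_mul, transpose_mul, transpose_transpose, Matrix.mul_assoc]
  simp only [coronaConj, coronaStar, fromBlocks_transpose, fromBlocks_multiply, transpose_zero,
    Matrix.zero_mul, Matrix.mul_zero, add_zero, zero_add, fromBlocks_mul_fromRows,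
    fromRows_mul, mul_fromCols, fromCols_mul_fromBlocks]
  congr 1
  · rw [hmu]
  · rw [hmuT]
  · rw [hK, ← mul_kronecker_mul, ← mul_kronecker_mul, one_mul, mul_one, mul_one, hR]

theorem charpoly_coronaStar_conj (A : Matrix (Fin n) (Fin n) ℝ) (B : Matrix (Fin m) (Fin m) ℝ)
    (ν : Fin m → ℝ) {U : Matrix (Fin n) (Fin n) ℝ} {μ₁ μ₂ : Fin n → ℝ}
    (hU : U ∈ orthogonalGroup (Fin n) ℝ) (hμ₁ : diagonal μ₁ ∈ orthogonalGroup (Fin n) ℝ)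
    (hμ₂ : diagonal μ₂ ∈ orthogonalGroup (Fin n) ℝ) :
    (coronaStar (U * A * Uᵀ) B μ₂ ν).charpoly = (coronaStar A B μ₁ ν).charpoly := by
  set R := diagonal μ₂ * U * diagonal μ₁
  have hR : R ∈ orthogonalGroup (Fin n) ℝ := mul_mem (mul_mem hμ₂ hU) hμ₁
  have hμ : U * diagonal μ₁ * Rᵀ = diagonal μ₂ := by
    rw [mem_orthogonalGroup_iff, diagonal_transpose] at hμ₁
    rw [mem_orthogonalGroup_iff] at hU
    simp only [R, transpose_mul, diagonal_transpose, Matrix.mul_assoc]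
    rw [← Matrix.mul_assoc (diagonal μ₁), hμ₁, Matrix.one_mul, ← Matrix.mul_assoc, hU,
      Matrix.one_mul]
  rw [← coronaConj_mul_coronaStar_mul_transpose U R A B μ₁ μ₂ ν
    ((mem_orthogonalGroup_iff _ ℝ).1 hR) hμ, charpoly_mul_mul_of_mul_eq_one
    ((mem_orthogonalGroup_iff' _ ℝ).1 (coronaConj_mem_orthogonalGroup hU hR))]

end Corona

theorem corona_A_cospectral_left_general (n : ℕ)
    (A1 : Matrix (Fin n) (Fin n) ℝ) (hA1sym : A1.IsSymm)
    (μ1 : Fin n → ℝ) (hμ1 : ∀ i, μ1 i = 1 ∨ μ1 i = -1)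
    (A2 : Matrix (Fin n) (Fin n) ℝ) (hA2sym : A2.IsSymm)
    (μ2 : Fin n → ℝ) (hμ2 : ∀ i, μ2 i = 1 ∨ μ2 i = -1)
    (hcospec : (Matrix.diagonal μ1 * A1.map abs * Matrix.diagonal μ1).charpoly
      = (Matrix.diagonal μ2 * A2.map abs * Matrix.diagonal μ2).charpoly)
    (m : ℕ) (B : Matrix (Fin m) (Fin m) ℝ)
    (ν : Fin m → ℝ) :
    (coronaStar (Matrix.diagonal μ1 * A1.map abs * Matrix.diagonal μ1) B μ1 ν).charpoly
      = (coronaStar (Matrix.diagonal μ2 * A2.map abs * Matrix.diagonal μ2) B μ2 ν).charpoly := by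
  have hM₁ := isHermitian_iff_isSymm.2 ((hA1sym.map abs).diagonal_mul_mul_diagonal μ1)
  have hM₂ := isHermitian_iff_isSymm.2 ((hA2sym.map abs).diagonal_mul_mul_diagonal μ2)
  obtain ⟨U, hU, hconj⟩ := hM₁.exists_unitary_conj_eq_of_charpoly_eq hM₂ hcospec
  rw [star_eq_conjTranspose, conjTranspose_eq_transpose_of_trivial] at hconj
  rw [← hconj, charpoly_coronaStar_conj _ B ν hU (diagonal_mem_orthogonalGroup hμ1)
    (diagonal_mem_orthogonalGroup hμ2)]

/-- If `Γ₁, Γ₂` have the same order `n` and their `μ`-signed adjacency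
matrices `Φ₁·|A₁|·Φ₁` and `Φ₂·|A₂|·Φ₂` are cospectral, then for every signed graph `Γ`,
`Γ₁⊛Γ` and `Γ₂⊛Γ` are `A`-cospectral. -/
theorem corona_A_cospectral_left (n : ℕ)
    (A1 : Matrix (Fin n) (Fin n) ℝ) (hA1sym : A1.IsSymm) (hA1diag : ∀ i, A1 i i = 0)
    (hA1ent : ∀ i j, A1 i j = 1 ∨ A1 i j = 0 ∨ A1 i j = -1)
    (μ1 : Fin n → ℝ) (hμ1 : ∀ i, μ1 i = 1 ∨ μ1 i = -1)
    (A2 : Matrix (Fin n) (Fin n) ℝ) (hA2sym : A2.IsSymm) (hA2diag : ∀ i, A2 i i = 0)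
    (hA2ent : ∀ i j, A2 i j = 1 ∨ A2 i j = 0 ∨ A2 i j = -1)
    (μ2 : Fin n → ℝ) (hμ2 : ∀ i, μ2 i = 1 ∨ μ2 i = -1)
    (hcospec : (Matrix.diagonal μ1 * A1.map abs * Matrix.diagonal μ1).charpoly
      = (Matrix.diagonal μ2 * A2.map abs * Matrix.diagonal μ2).charpoly)
    (m : ℕ) (B : Matrix (Fin m) (Fin m) ℝ) (hBsym : B.IsSymm) (hBdiag : ∀ i, B i i = 0)
    (hBent : ∀ i j, B i j = 1 ∨ B i j = 0 ∨ B i j = -1)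
    (ν : Fin m → ℝ) (hν : ∀ i, ν i = 1 ∨ ν i = -1) :
    (coronaStar (Matrix.diagonal μ1 * A1.map abs * Matrix.diagonal μ1) B μ1 ν).charpoly
      = (coronaStar (Matrix.diagonal μ2 * A2.map abs * Matrix.diagonal μ2) B μ2 ν).charpoly :=
  corona_A_cospectral_left_general n A1 hA1sym μ1 hμ1 A2 hA2sym μ2 hμ2 hcospec m B ν
end

section
/- Let Γ1 and Γ2 be signed graphs of the same order n with adjacency matrices A1, A2 and markings μ1, μ2 such that A1 and A2 have the same characteristic polynomial and the signed coronals agree, χ_{A1}(x) = χ_{A2}(x) for every real x at which both are defined. Then for every signed graph Γ (with marking), the adjacency matrices A(Γ⊛Γ1) and A(Γ⊛Γ2) have the same characteristic polynomial, i.e., Γ⊛Γ1 and Γ⊛Γ2 are A-cospectral. -/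
/-!
Fix `x` outside the spectra of `A₁` and `A₂`. In `x·I − A(Γ⊛Γᵢ)` the last diagonal block
`(x·I − Aᵢ) ⊗ I` is invertible, and since the marking block `μᵢᵀ ⊗ diag ν` sandwiches
`(x·I − Aᵢ)⁻¹ ⊗ I` down to the scalar `χ_{Aᵢ}(x)` times `diag ν²`, the Schur complement is
`[[x·I, −Bμ], [−Bμ, x·I − χ_{Aᵢ}(x)·diag ν²]]`. So the characteristic polynomial of `Γ⊛Γᵢ` at `x`
depends on `Γᵢ` only through `det (x·I − Aᵢ)` and `χ_{Aᵢ}(x)`, and two polynomials that agree at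
all but finitely many points are equal.
-/

open Matrix Kronecker BigOperators

open Polynomial

theorem Polynomial.eq_of_eval_eq_of_eval_ne_zero {R : Type*} [CommRing R] [IsDomain R]
    [Infinite R] {p q f : R[X]} (hf : f ≠ 0) (h : ∀ x, f.eval x ≠ 0 → p.eval x = q.eval x) :
    p = q :=
  eq_of_infinite_eval_eq p q <| (finite_setOfPred_isRoot hf).infinite_compl.mono fun x hx => h x hx

theorem Matrix.eval_charpoly_eq_det_smul_one_sub {R V : Type*} [CommRing R] [Fintype V]
    [DecidableEq V] (M : Matrix V V R) (x : R) :
    M.charpoly.eval x = (x • (1 : Matrix V V R) - M).det := by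
  rw [eval_charpoly, scalar_apply, smul_one_eq_diagonal]

section

variable {m n : ℕ}

theorem muBlock_mul_kronecker_one_mul_transpose (ν : Fin m → ℝ) (μ : Fin n → ℝ)
    (R : Matrix (Fin n) (Fin n) ℝ) :
    muBlock ν μ * (R ⊗ₖ (1 : Matrix (Fin m) (Fin m) ℝ)) * (muBlock ν μ)ᵀ
      = (μ ⬝ᵥ (R *ᵥ μ)) • diagonal (ν * ν) := by
  ext i i'
  simp only [mul_apply, muBlock, transpose_apply, of_apply, kroneckerMap_apply,
    Fintype.sum_prod_type, diagonal_apply, one_apply, Matrix.smul_apply, smul_eq_mul, dotProduct,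
    mulVec, mul_ite, ite_mul, mul_zero, zero_mul, Finset.sum_ite_eq, Finset.sum_ite_eq',
    Finset.mem_univ, if_true]
  split_ifs with h
  · subst h
    simp only [Finset.sum_mul, Finset.mul_sum, Pi.mul_apply]
    rw [Finset.sum_comm]
    refine Finset.sum_congr rfl fun a _ => Finset.sum_congr rfl fun b _ => ?_
    ring
  · simp

theorem smul_one_sub_coronaStar_s12 (x : ℝ) (Bμ : Matrix (Fin m) (Fin m) ℝ)
    (A : Matrix (Fin n) (Fin n) ℝ) (ν : Fin m → ℝ) (μ : Fin n → ℝ) :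
    x • 1 - coronaStar Bμ A ν μ =
      fromBlocks (fromBlocks (x • 1) (-Bμ) (-Bμ) (x • 1)) (-fromRows 0 (muBlock ν μ))
        (-fromCols 0 (muBlock ν μ)ᵀ) ((x • 1 - A) ⊗ₖ (1 : Matrix (Fin m) (Fin m) ℝ)) := by
  have hkron : (x • 1 - A) ⊗ₖ (1 : Matrix (Fin m) (Fin m) ℝ) = x • 1 - A ⊗ₖ 1 := by
    rw [eq_sub_iff_add_eq, ← add_kronecker, sub_add_cancel, smul_kronecker, one_kronecker_one]
  rw [coronaStar, hkron, ← fromBlocks_one, ← fromBlocks_one, fromBlocks_smul, fromBlocks_smul,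
    sub_eq_add_neg, fromBlocks_neg, fromBlocks_neg, fromBlocks_add, fromBlocks_add]
  simp only [smul_zero, neg_zero, add_zero, zero_add, sub_eq_add_neg]

theorem det_smul_one_sub_coronaStar_s12 (x : ℝ) (Bμ : Matrix (Fin m) (Fin m) ℝ)
    (A : Matrix (Fin n) (Fin n) ℝ) (ν : Fin m → ℝ) (μ : Fin n → ℝ)
    (hA : IsUnit (x • (1 : Matrix (Fin n) (Fin n) ℝ) - A).det) :
    (x • 1 - coronaStar Bμ A ν μ).det = (x • 1 - A).det ^ m *
      (fromBlocks (x • 1) (-Bμ) (-Bμ) (x • 1 - coronal A μ x • diagonal (ν * ν))).det := by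
  have hdet : ((x • 1 - A) ⊗ₖ (1 : Matrix (Fin m) (Fin m) ℝ)).det = (x • 1 - A).det ^ m := by
    simp [det_kronecker]
  have : Invertible ((x • 1 - A) ⊗ₖ (1 : Matrix (Fin m) (Fin m) ℝ)) :=
    invertibleOfIsUnitDet _ (hdet ▸ hA.pow m)
  have hschur : -fromRows (0 : Matrix (Fin m) (Fin n × Fin m) ℝ) (muBlock ν μ) *
      ⅟((x • 1 - A) ⊗ₖ (1 : Matrix (Fin m) (Fin m) ℝ)) *
      -fromCols (0 : Matrix (Fin n × Fin m) (Fin m) ℝ) (muBlock ν μ)ᵀ =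
        fromBlocks 0 0 0 (coronal A μ x • diagonal (ν * ν)) := by
    rw [invOf_eq_nonsing_inv, inv_kronecker, inv_one, Matrix.neg_mul, Matrix.neg_mul,
      Matrix.mul_neg, neg_neg, fromRows_mul, fromRows_mul_fromCols,
      muBlock_mul_kronecker_one_mul_transpose, coronal]
    simp
  rw [smul_one_sub_coronaStar_s12, det_fromBlocks₂₂, hdet, hschur]
  congr 2
  ext (i | i) (j | j) <;> simp

end

theorem corona_A_cospectral_right_general (n : ℕ)
    (A1 : Matrix (Fin n) (Fin n) ℝ) (μ1 : Fin n → ℝ)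
    (A2 : Matrix (Fin n) (Fin n) ℝ) (μ2 : Fin n → ℝ)
    (hcospec : A1.charpoly = A2.charpoly)
    (hcoronal : ∀ x : ℝ, IsUnit (x • (1 : Matrix (Fin n) (Fin n) ℝ) - A1).det →
      IsUnit (x • (1 : Matrix (Fin n) (Fin n) ℝ) - A2).det →
      coronal A1 μ1 x = coronal A2 μ2 x)
    (m : ℕ) (B : Matrix (Fin m) (Fin m) ℝ) (ν : Fin m → ℝ) :
    (coronaStar (Matrix.diagonal ν * B.map abs * Matrix.diagonal ν) A1 ν μ1).charpoly
      = (coronaStar (Matrix.diagonal ν * B.map abs * Matrix.diagonal ν) A2 ν μ2).charpoly := by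
  refine eq_of_eval_eq_of_eval_ne_zero
    (mul_ne_zero A1.charpoly_monic.ne_zero A2.charpoly_monic.ne_zero) fun x hx => ?_
  rw [eval_mul, eval_charpoly_eq_det_smul_one_sub, eval_charpoly_eq_det_smul_one_sub] at hx
  have hU1 := (left_ne_zero_of_mul hx).isUnit
  have hU2 := (right_ne_zero_of_mul hx).isUnit
  have hdet : (x • 1 - A1).det = (x • 1 - A2).det := by
    rw [← eval_charpoly_eq_det_smul_one_sub, ← eval_charpoly_eq_det_smul_one_sub, hcospec]
  rw [eval_charpoly_eq_det_smul_one_sub, eval_charpoly_eq_det_smul_one_sub,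
    det_smul_one_sub_coronaStar_s12 x _ _ _ _ hU1, det_smul_one_sub_coronaStar_s12 x _ _ _ _ hU2, hdet,
    hcoronal x hU1 hU2]

/-- If `Γ₁, Γ₂` have the same order `n`, `A₁` and `A₂` are cospectral and
their signed coronals agree wherever both are defined, then for every signed graph `Γ`,
`Γ⊛Γ₁` and `Γ⊛Γ₂` are `A`-cospectral. -/
theorem corona_A_cospectral_right (n : ℕ)
    (A1 : Matrix (Fin n) (Fin n) ℝ) (hA1sym : A1.IsSymm) (hA1diag : ∀ i, A1 i i = 0)
    (hA1ent : ∀ i j, A1 i j = 1 ∨ A1 i j = 0 ∨ A1 i j = -1)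
    (μ1 : Fin n → ℝ) (hμ1 : ∀ i, μ1 i = 1 ∨ μ1 i = -1)
    (A2 : Matrix (Fin n) (Fin n) ℝ) (hA2sym : A2.IsSymm) (hA2diag : ∀ i, A2 i i = 0)
    (hA2ent : ∀ i j, A2 i j = 1 ∨ A2 i j = 0 ∨ A2 i j = -1)
    (μ2 : Fin n → ℝ) (hμ2 : ∀ i, μ2 i = 1 ∨ μ2 i = -1)
    (hcospec : A1.charpoly = A2.charpoly)
    (hcoronal : ∀ x : ℝ, IsUnit (x • (1 : Matrix (Fin n) (Fin n) ℝ) - A1).det →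
      IsUnit (x • (1 : Matrix (Fin n) (Fin n) ℝ) - A2).det →
      coronal A1 μ1 x = coronal A2 μ2 x)
    (m : ℕ) (B : Matrix (Fin m) (Fin m) ℝ) (hBsym : B.IsSymm) (hBdiag : ∀ i, B i i = 0)
    (hBent : ∀ i j, B i j = 1 ∨ B i j = 0 ∨ B i j = -1)
    (ν : Fin m → ℝ) (hν : ∀ i, ν i = 1 ∨ ν i = -1) :
    (coronaStar (Matrix.diagonal ν * B.map abs * Matrix.diagonal ν) A1 ν μ1).charpoly
      = (coronaStar (Matrix.diagonal ν * B.map abs * Matrix.diagonal ν) A2 ν μ2).charpoly :=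
  corona_A_cospectral_right_general n A1 μ1 A2 μ2 hcospec hcoronal m B ν
end

section
/- Let Γ1 be an r1-regular signed graph on n1 vertices with adjacency matrix A1 and marking μ1, and Γ2 any signed graph on n2 vertices with adjacency matrix A2 and marking μ2. Then for every real x such that (x−1)·I_{n2} − L(Γ2) is invertible, det(x·I − L(Γ1⊛Γ2)) = det((x−1)·I_{n2} − L(Γ2))^{n1} · det( (x − r1)·(x − r1 − n2 − χ_{L(Γ2)}(x−1))·I_{n1} − A_{1μ}² ). Equivalently, the Laplacian characteristic polynomial of Γ1⊛Γ2 equals ∏_{i=1}^{n2}(x − 1 − γ_{2i})^{n1} · ∏_{i=1}^{n1}( (x − r1 − n2 − χ_{L(Γ2)}(x−1))(x − r1) − (λ'_{1i})² ), where γ_{2i} are the eigenvalues of L(Γ2) and λ'_{1i} the eigenvalues of A_{1μ}. -/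
open Matrix Kronecker BigOperators

/-- The degree matrix of a signed graph: the diagonal matrix of the row sums of the
entrywise absolute value of its adjacency matrix. -/
noncomputable def degMat {V : Type} [Fintype V] [DecidableEq V] (M : Matrix V V ℝ) :
    Matrix V V ℝ :=
  Matrix.diagonal fun i => ∑ j, |M i j|

/-!
Write `S = (x - 1)·I - L(Γ₂)` and `B = μ₂ᵀ ⊗ Φ₁`. Since `Γ₁` is regular and the markings are
`±1`, `x·I - L(Γ₁ ⊛ Γ₂)` is the block matrix `[[P, (0; B)], [(0, Bᵀ), S ⊗ I]]` with
`P = [[(x - r₁)·I, A₁μ], [A₁μ, (x - r₁ - n₂)·I]]`. Taking the Schur complement of the invertible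
block `S ⊗ I` gives the factor `det S ^ n₁`, and with `χ = χ_{L(Γ₂)}(x - 1)` we have
`B (S⁻¹ ⊗ I) Bᵀ = χ·Φ₁² = χ·I`, which only shifts the lower right block of `P` by `-χ`. The
blocks of what remains commute, so its determinant is `det ((x - r₁)(x - r₁ - n₂ - χ)·I - A₁μ²)`.
-/

theorem Matrix.fromBlocks_sub {l m n o α : Type*} [Sub α] (A : Matrix n l α) (B : Matrix n m α)
    (C : Matrix o l α) (D : Matrix o m α) (A' : Matrix n l α) (B' : Matrix n m α)
    (C' : Matrix o l α) (D' : Matrix o m α) :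
    fromBlocks A B C D - fromBlocks A' B' C' D' = fromBlocks (A - A') (B - B') (C - C') (D - D') := by
  ext (i | i) (j | j) <;> rfl

theorem Matrix.det_fromBlocks_smul_one₂₂_of_isRegular {n R : Type*} [Fintype n] [DecidableEq n]
    [CommRing R] (A B C : Matrix n n R) {c : R} (hc : IsRegular (c ^ Fintype.card n)) :
    (fromBlocks A B C (c • 1)).det = (c • A - B * C).det := by
  have hmul : fromBlocks A B C (c • 1) * fromBlocks (c • 1) 0 (-C) 1
      = fromBlocks (c • A - B * C) B 0 (c • 1) := by
    simp [fromBlocks_multiply, sub_eq_add_neg]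
  have hdet := congrArg det hmul
  simp only [det_mul, det_fromBlocks_zero₁₂, det_fromBlocks_zero₂₁, det_smul, det_one,
    mul_one] at hdet
  exact hc.right.eq_iff.mp hdet

open Polynomial in
theorem Matrix.det_fromBlocks_smul_one₂₂ {n R : Type*} [Fintype n] [DecidableEq n]
    [CommRing R] (A B C : Matrix n n R) (c : R) :
    (fromBlocks A B C (c • 1)).det = (c • A - B * C).det := by
  -- `c ^ n` need not be regular in `R`, but `X ^ n` is in `R[X]`: specialise there, evaluate at `c`.
  have generic := det_fromBlocks_smul_one₂₂_of_isRegular (A.map Polynomial.C) (B.map Polynomial.C)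
    (C.map Polynomial.C) (isRegular_X_pow (R := R) (Fintype.card n))
  have := congrArg (evalRingHom c) generic
  rw [RingHom.map_det, RingHom.map_det] at this
  convert this using 2 <;> ext i j
  · rcases i with i | i <;> rcases j with j | j <;> by_cases h : i = j <;> simp [h]
  · simp [mul_apply, eval_finsetSum, mul_comm c]

section Corona

variable {n1 n2 : ℕ} {μ1 : Fin n1 → ℝ} {μ2 : Fin n2 → ℝ}

theorem abs_diagonal_mul_mul_diagonal (hμ1 : ∀ i, |μ1 i| = 1) (A : Matrix (Fin n1) (Fin n1) ℝ)
    (i j : Fin n1) : |(diagonal μ1 * A * diagonal μ1) i j| = |A i j| := by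
  simp [mul_diagonal, diagonal_mul, abs_mul, hμ1]

theorem muBlock_mul_kronecker_one_mul_transpose_s13 (T : Matrix (Fin n2) (Fin n2) ℝ) :
    muBlock μ1 μ2 * (T ⊗ₖ (1 : Matrix (Fin n1) (Fin n1) ℝ)) * (muBlock μ1 μ2)ᵀ
      = (μ2 ⬝ᵥ (T *ᵥ μ2)) • diagonal (μ1 * μ1) := by
  ext i i'
  by_cases h : i = i'
  · subst h
    simp only [muBlock, diagonal_apply, mul_ite, mul_zero, mul_apply, of_apply, kroneckerMap_apply,
      one_apply, mul_one, ite_mul, zero_mul, Fintype.sum_prod_type, Finset.sum_ite_eq',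
      Finset.mem_univ, ↓reduceIte, Finset.sum_ite_irrel, Finset.sum_const_zero, transpose_apply,
      Finset.sum_mul, Finset.sum_ite_eq, dotProduct, mulVec, Finset.mul_sum, Matrix.smul_apply,
      Pi.mul_apply, smul_eq_mul]
    rw [Finset.sum_comm]
    exact Finset.sum_congr rfl fun _ _ => Finset.sum_congr rfl fun _ _ => by ring
  · simp [muBlock, mul_apply, Fintype.sum_prod_type, diagonal_apply, one_apply, h]

theorem abs_muBlock (hμ1 : ∀ i, |μ1 i| = 1) (hμ2 : ∀ j, |μ2 j| = 1) (i : Fin n1)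
    (p : Fin n2 × Fin n1) : |muBlock μ1 μ2 i p| = (1 : Matrix (Fin n1) (Fin n1) ℝ) i p.2 := by
  by_cases h : i = p.2 <;> simp [muBlock, diagonal_apply, one_apply, h, hμ1, hμ2]

theorem degMat_coronaStar (hμ1 : ∀ i, |μ1 i| = 1) (hμ2 : ∀ j, |μ2 j| = 1)
    (M : Matrix (Fin n1) (Fin n1) ℝ) (A2 : Matrix (Fin n2) (Fin n2) ℝ) :
    degMat (coronaStar M A2 μ1 μ2) = diagonal (Sum.elim
      (Sum.elim (fun i => ∑ j, |M i j|) (fun i => ∑ j, |M i j| + n2))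
      (fun p => ∑ j, |A2 p.1 j| + 1)) := by
  unfold degMat
  congr 1
  ext ((i | i) | ⟨j, k⟩) <;>
    simp only [coronaStar, Fintype.sum_sum_type, Fintype.sum_prod_type, fromBlocks_apply₁₁,
      fromBlocks_apply₁₂, fromBlocks_apply₂₁, fromBlocks_apply₂₂, fromRows_apply_inl,
      fromRows_apply_inr, fromCols_apply_inl, fromCols_apply_inr, Sum.elim_inl, Sum.elim_inr,
      transpose_apply, kroneckerMap_apply, abs_mul, abs_muBlock hμ1 hμ2] <;>
    simp [one_apply, apply_ite abs, add_comm]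

theorem smul_one_sub_laplacian_coronaStar (hμ1 : ∀ i, |μ1 i| = 1) (hμ2 : ∀ j, |μ2 j| = 1)
    {M : Matrix (Fin n1) (Fin n1) ℝ} {r : ℝ} (hreg : ∀ i, ∑ j, |M i j| = r)
    (A2 : Matrix (Fin n2) (Fin n2) ℝ) (x : ℝ) :
    x • 1 - (degMat (coronaStar M A2 μ1 μ2) - coronaStar M A2 μ1 μ2)
      = fromBlocks (fromBlocks ((x - r) • 1) M M ((x - r - n2) • 1))
          (fromRows 0 (muBlock μ1 μ2)) (fromCols 0 (muBlock μ1 μ2)ᵀ)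
          (((x - 1) • 1 - (degMat A2 - A2)) ⊗ₖ 1) := by
  rw [degMat_coronaStar hμ1 hμ2]
  simp only [hreg]
  ext ((i | i) | ⟨j, k⟩) ((i' | i') | ⟨j', k'⟩) <;>
    simp [coronaStar, degMat, one_apply, diagonal_apply, ite_sub_ite, sub_add_eq_sub_sub, ite_and]
  split_ifs <;> ring

end Corona

theorem corona_laplacian_charpoly_general (n1 n2 : ℕ) (r1 : ℝ)
    (A1 : Matrix (Fin n1) (Fin n1) ℝ)
    (μ1 : Fin n1 → ℝ) (hμ1 : ∀ i, μ1 i = 1 ∨ μ1 i = -1)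
    (hreg : ∀ i, ∑ j, |A1 i j| = r1)
    (A2 : Matrix (Fin n2) (Fin n2) ℝ)
    (μ2 : Fin n2 → ℝ) (hμ2 : ∀ i, μ2 i = 1 ∨ μ2 i = -1)
    (x : ℝ)
    (hx : IsUnit ((x - 1) • (1 : Matrix (Fin n2) (Fin n2) ℝ) - (degMat A2 - A2)).det) :
    (x • 1 -
        (degMat (coronaStar (Matrix.diagonal μ1 * A1.map abs * Matrix.diagonal μ1) A2 μ1 μ2)
          - coronaStar (Matrix.diagonal μ1 * A1.map abs * Matrix.diagonal μ1) A2 μ1 μ2)).det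
      = ((x - 1) • (1 : Matrix (Fin n2) (Fin n2) ℝ) - (degMat A2 - A2)).det ^ n1 *
        (((x - r1) * (x - r1 - (n2 : ℝ) - coronal (degMat A2 - A2) μ2 (x - 1))) •
            (1 : Matrix (Fin n1) (Fin n1) ℝ)
          - (Matrix.diagonal μ1 * A1.map abs * Matrix.diagonal μ1) ^ 2).det := by
  have hμ1abs i : |μ1 i| = 1 := (abs_eq zero_le_one).2 (hμ1 i)
  have hμ2abs j : |μ2 j| = 1 := (abs_eq zero_le_one).2 (hμ2 j)
  have hμ1sq : μ1 * μ1 = 1 := funext fun i => by rcases hμ1 i with h | h <;> simp [h]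
  have hregμ i : ∑ j, |(diagonal μ1 * A1.map abs * diagonal μ1) i j| = r1 := by
    simp only [abs_diagonal_mul_mul_diagonal hμ1abs, map_apply, abs_abs, hreg]
  have : Invertible (((x - 1) • 1 - (degMat A2 - A2)) ⊗ₖ (1 : Matrix (Fin n1) (Fin n1) ℝ)) :=
    invertibleOfIsUnitDet _ (by rw [det_kronecker, det_one, one_pow, mul_one]; exact hx.pow _)
  rw [coronal, smul_one_sub_laplacian_coronaStar hμ1abs hμ2abs hregμ, det_fromBlocks₂₂,
    invOf_eq_nonsing_inv, inv_kronecker, inv_one, fromRows_mul, fromRows_mul_fromCols,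
    muBlock_mul_kronecker_one_mul_transpose_s13, hμ1sq, diagonal_one']
  simp only [Matrix.zero_mul, Matrix.mul_zero, fromBlocks_sub, sub_zero, ← sub_smul]
  rw [det_fromBlocks_smul_one₂₂, smul_smul, det_kronecker, det_one, one_pow, mul_one,
    Fintype.card_fin, mul_comm (x - r1), sq]

/-- For `Γ₁` an `r₁`-regular signed graph on `n₁` vertices and `Γ₂` arbitrary
on `n₂` vertices, for every real `x` with `(x−1)·I − L(Γ₂)` invertible,
`det(x·I − L(Γ₁⊛Γ₂)) = det((x−1)·I − L(Γ₂))^{n₁} · det((x−r₁)(x−r₁−n₂−χ_{L(Γ₂)}(x−1))·I_{n₁} − A₁μ²)`. -/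
theorem corona_laplacian_charpoly (n1 n2 : ℕ) (r1 : ℝ)
    (A1 : Matrix (Fin n1) (Fin n1) ℝ) (hA1sym : A1.IsSymm) (hA1diag : ∀ i, A1 i i = 0)
    (hA1ent : ∀ i j, A1 i j = 1 ∨ A1 i j = 0 ∨ A1 i j = -1)
    (μ1 : Fin n1 → ℝ) (hμ1 : ∀ i, μ1 i = 1 ∨ μ1 i = -1)
    (hreg : ∀ i, ∑ j, |A1 i j| = r1)
    (A2 : Matrix (Fin n2) (Fin n2) ℝ) (hA2sym : A2.IsSymm) (hA2diag : ∀ i, A2 i i = 0)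
    (hA2ent : ∀ i j, A2 i j = 1 ∨ A2 i j = 0 ∨ A2 i j = -1)
    (μ2 : Fin n2 → ℝ) (hμ2 : ∀ i, μ2 i = 1 ∨ μ2 i = -1)
    (x : ℝ)
    (hx : IsUnit ((x - 1) • (1 : Matrix (Fin n2) (Fin n2) ℝ) - (degMat A2 - A2)).det) :
    (x • 1 -
        (degMat (coronaStar (Matrix.diagonal μ1 * A1.map abs * Matrix.diagonal μ1) A2 μ1 μ2)
          - coronaStar (Matrix.diagonal μ1 * A1.map abs * Matrix.diagonal μ1) A2 μ1 μ2)).det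
      = ((x - 1) • (1 : Matrix (Fin n2) (Fin n2) ℝ) - (degMat A2 - A2)).det ^ n1 *
        (((x - r1) * (x - r1 - (n2 : ℝ) - coronal (degMat A2 - A2) μ2 (x - 1))) •
            (1 : Matrix (Fin n1) (Fin n1) ℝ)
          - (Matrix.diagonal μ1 * A1.map abs * Matrix.diagonal μ1) ^ 2).det :=
  corona_laplacian_charpoly_general n1 n2 r1 A1 μ1 hμ1 hreg A2 μ2 hμ2 x hx
end

section
/- Let Γ1 and Γ2 be r-regular signed graphs of the same order n with adjacency matrices A1, A2 and markings μ1, μ2 such that the μ-signed adjacency matrices Φ1·|A1|·Φ1 and Φ2·|A2|·Φ2 have the same characteristic polynomial. Then for every signed graph Γ (with marking), the Laplacian matrices L(Γ1⊛Γ) and L(Γ2⊛Γ) have the same characteristic polynomial, i.e., Γ1⊛Γ and Γ2⊛Γ are Laplacian cospectral. -/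
open Matrix Kronecker BigOperators

/-!
Both `Φ₁|A₁|Φ₁` and `Φ₂|A₂|Φ₂` are symmetric with the same characteristic polynomial, hence
orthogonally similar: `Φ₂|A₂|Φ₂ = U Φ₁|A₁|Φ₁ Uᵀ`. Conjugation by the orthogonal block matrix
`diag(U, U, I ⊗ Φ₂UΦ₁)` carries the adjacency matrix of `Γ₁ ⊛ Γ` to that of `Γ₂ ⊛ Γ`, and it fixes
the common degree matrix `diag(r I, (r + m) I, (I + D(Γ)) ⊗ I)`, so the two Laplacians are similar.
-/

section Similarity

variable {ι : Type*} [Fintype ι] [DecidableEq ι]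

theorem Matrix.charpoly_mul_mul_eq_of_mul_eq_one {R : Type*} [CommRing R] {P Q : Matrix ι ι R}
    (A : Matrix ι ι R) (h : P * Q = 1) : (P * A * Q).charpoly = A.charpoly := by
  rw [charpoly_mul_comm, ← Matrix.mul_assoc, mul_eq_one_comm.mp h, Matrix.one_mul]

theorem Matrix.IsHermitian.exists_unitary_conj_eq_of_charpoly_eq_s14 {𝕜 : Type*} [RCLike 𝕜]
    {A B : Matrix ι ι 𝕜} (hA : A.IsHermitian) (hB : B.IsHermitian)
    (h : A.charpoly = B.charpoly) :
    ∃ U : unitaryGroup ι 𝕜, Unitary.conjStarAlgAut 𝕜 _ U A = B := by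
  refine ⟨hB.eigenvectorUnitary * star hA.eigenvectorUnitary, ?_⟩
  rw [Unitary.conjStarAlgAut_mul_apply, hA.conjStarAlgAut_star_eigenvectorUnitary,
    (hA.eigenvalues_eq_eigenvalues_iff hB).mpr h, ← hB.spectral_theorem]

theorem Matrix.IsSymm.exists_orthogonal_conj_eq_of_charpoly_eq {A B : Matrix ι ι ℝ}
    (hA : A.IsSymm) (hB : B.IsSymm) (h : A.charpoly = B.charpoly) :
    ∃ U : Matrix ι ι ℝ, U * Uᵀ = 1 ∧ U * A * Uᵀ = B := by
  obtain ⟨U, hU⟩ := (isHermitian_iff_isSymm.mpr hA).exists_unitary_conj_eq_of_charpoly_eq_s14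
    (isHermitian_iff_isSymm.mpr hB) h
  refine ⟨U, ?_, ?_⟩
  · simpa [star_eq_conjTranspose] using U.2.2
  · simpa [star_eq_conjTranspose] using hU

end Similarity

theorem Matrix.fromBlocks_diag_mul_fromBlocks_mul_transpose {l o α : Type*} [Fintype l]
    [Fintype o] [Semiring α] (P : Matrix l l α) (S : Matrix o o α) (X : Matrix l l α)
    (Y : Matrix l o α) (Z : Matrix o l α) (T : Matrix o o α) :
    fromBlocks P 0 0 S * fromBlocks X Y Z T * (fromBlocks P 0 0 S)ᵀ =
      fromBlocks (P * X * Pᵀ) (P * Y * Sᵀ) (S * Z * Pᵀ) (S * T * Sᵀ) := by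
  simp [fromBlocks_transpose, fromBlocks_multiply]

theorem diagonal_mul_diagonal_self_of_abs_eq_one {ι : Type*} [Fintype ι] [DecidableEq ι]
    {μ : ι → ℝ} (hμ : ∀ i, |μ i| = 1) : diagonal μ * diagonal μ = 1 := by
  rw [diagonal_mul_diagonal, ← diagonal_one]
  congr 1
  funext i
  rw [← abs_mul_abs_self, hμ, one_mul]

theorem Matrix.IsSymm.diagonal_mul_map_abs_mul_diagonal {ι : Type*} [Fintype ι] [DecidableEq ι]
    {A : Matrix ι ι ℝ} (hA : A.IsSymm) (μ : ι → ℝ) :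
    (diagonal μ * A.map abs * diagonal μ).IsSymm := by
  simp [IsSymm, transpose_mul, (hA.map abs).eq, Matrix.mul_assoc]

theorem sum_abs_diagonal_mul_map_abs_mul_diagonal {ι : Type*} [Fintype ι] [DecidableEq ι]
    (A : Matrix ι ι ℝ) {μ : ι → ℝ} (hμ : ∀ i, |μ i| = 1) (i : ι) :
    ∑ j, |(diagonal μ * A.map abs * diagonal μ) i j| = ∑ j, |A i j| := by
  simp [diagonal_mul, mul_diagonal, abs_mul, hμ]

section Corona

variable {n m : ℕ}

theorem muBlock_one_mul_one_kronecker (ν : Fin m → ℝ) (W : Matrix (Fin n) (Fin n) ℝ) :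
    muBlock (1 : Fin n → ℝ) ν * ((1 : Matrix (Fin m) (Fin m) ℝ) ⊗ₖ W) =
      W * muBlock (1 : Fin n → ℝ) ν := by
  ext i ⟨j, k⟩
  simp [muBlock, Matrix.mul_apply, kroneckerMap_apply, Fintype.sum_prod_type, one_apply,
    diagonal_apply, mul_comm]

theorem mul_muBlock_mul_one_kronecker_transpose {U V : Matrix (Fin n) (Fin n) ℝ}
    {μ μ' : Fin n → ℝ} (ν : Fin m → ℝ) (h : U * diagonal μ * Vᵀ = diagonal μ') :
    U * muBlock μ ν * ((1 : Matrix (Fin m) (Fin m) ℝ) ⊗ₖ V)ᵀ = muBlock μ' ν := by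
  rw [← kroneckerMap_transpose, transpose_one]
  calc U * muBlock μ ν * ((1 : Matrix (Fin m) (Fin m) ℝ) ⊗ₖ Vᵀ)
      = U * diagonal μ *
          (muBlock (1 : Fin n → ℝ) ν * ((1 : Matrix (Fin m) (Fin m) ℝ) ⊗ₖ Vᵀ)) := by
        rw [muBlock_eq_diagonal_mul, Matrix.mul_assoc, Matrix.mul_assoc, Matrix.mul_assoc]
    _ = muBlock μ' ν := by
        rw [muBlock_one_mul_one_kronecker, ← Matrix.mul_assoc, h, ← muBlock_eq_diagonal_mul]

theorem abs_muBlock_apply {μ : Fin n → ℝ} {ν : Fin m → ℝ} (hμ : ∀ i, |μ i| = 1)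
    (hν : ∀ j, |ν j| = 1) (i : Fin n) (jk : Fin m × Fin n) :
    |muBlock μ ν i jk| = (1 : Matrix (Fin n) (Fin n) ℝ) i jk.2 := by
  by_cases h : i = jk.2 <;> simp [muBlock, diagonal_apply, one_apply, h, hμ, hν]

theorem sum_abs_muBlock_row {μ : Fin n → ℝ} {ν : Fin m → ℝ} (hμ : ∀ i, |μ i| = 1)
    (hν : ∀ j, |ν j| = 1) (i : Fin n) : ∑ jk, |muBlock μ ν i jk| = m := by
  simp only [abs_muBlock_apply hμ hν, Fintype.sum_prod_type, one_apply, Finset.sum_ite_eq,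
    Finset.mem_univ, if_true]
  simp

theorem sum_abs_muBlock_col {μ : Fin n → ℝ} {ν : Fin m → ℝ} (hμ : ∀ i, |μ i| = 1)
    (hν : ∀ j, |ν j| = 1) (jk : Fin m × Fin n) : ∑ i, |muBlock μ ν i jk| = 1 := by
  simp [abs_muBlock_apply hμ hν, one_apply]

theorem degMat_coronaStar_s14 {r : ℝ} {A : Matrix (Fin n) (Fin n) ℝ} {μ : Fin n → ℝ}
    {ν : Fin m → ℝ} (B : Matrix (Fin m) (Fin m) ℝ) (hA : ∀ i, ∑ j, |A i j| = r)
    (hμ : ∀ i, |μ i| = 1) (hν : ∀ j, |ν j| = 1) :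
    degMat (coronaStar A B μ ν) =
      fromBlocks (fromBlocks (r • 1) 0 0 ((r + m) • 1)) 0 0 ((1 + degMat B) ⊗ₖ 1) := by
  have hB : (1 + degMat B) ⊗ₖ (1 : Matrix (Fin n) (Fin n) ℝ) =
      diagonal fun jk => 1 + ∑ j', |B jk.1 j'| := by
    rw [degMat, ← diagonal_one, ← diagonal_one, diagonal_add, diagonal_kronecker_diagonal]
    simp
  rw [hB, smul_one_eq_diagonal, smul_one_eq_diagonal, fromBlocks_diagonal, fromBlocks_diagonal,
    degMat]
  congr 1
  funext x
  rcases x with (i | i) | ⟨j, i⟩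
  · simp [coronaStar, Fintype.sum_sum_type, hA]
  · simp [coronaStar, Fintype.sum_sum_type, hA, sum_abs_muBlock_row hμ hν]
  · simp [coronaStar, Fintype.sum_sum_type, sum_abs_muBlock_col hμ hν, Fintype.sum_prod_type,
      one_apply, apply_ite abs]

variable (m) in
def coronaTransform (U V : Matrix (Fin n) (Fin n) ℝ) :
    Matrix ((Fin n ⊕ Fin n) ⊕ Fin m × Fin n) ((Fin n ⊕ Fin n) ⊕ Fin m × Fin n) ℝ :=
  fromBlocks (fromBlocks U 0 0 U) 0 0 ((1 : Matrix (Fin m) (Fin m) ℝ) ⊗ₖ V)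

theorem coronaTransform_mul_transpose {U V : Matrix (Fin n) (Fin n) ℝ} (hU : U * Uᵀ = 1)
    (hV : V * Vᵀ = 1) : coronaTransform m U V * (coronaTransform m U V)ᵀ = 1 := by
  simp [coronaTransform, fromBlocks_transpose, fromBlocks_multiply, ← kroneckerMap_transpose,
    ← mul_kronecker_mul, hU, hV]

theorem coronaTransform_mul_coronaStar_mul_transpose {U V A A' : Matrix (Fin n) (Fin n) ℝ}
    {μ μ' : Fin n → ℝ} (B : Matrix (Fin m) (Fin m) ℝ) (ν : Fin m → ℝ) (hA : U * A * Uᵀ = A')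
    (hμ : U * diagonal μ * Vᵀ = diagonal μ') (hV : V * Vᵀ = 1) :
    coronaTransform m U V * coronaStar A B μ ν * (coronaTransform m U V)ᵀ =
      coronaStar A' B μ' ν := by
  have h12 : (fromBlocks U 0 0 U : Matrix (Fin n ⊕ Fin n) (Fin n ⊕ Fin n) ℝ) *
      fromRows (0 : Matrix (Fin n) (Fin m × Fin n) ℝ) (muBlock μ ν) *
      ((1 : Matrix (Fin m) (Fin m) ℝ) ⊗ₖ V)ᵀ = fromRows 0 (muBlock μ' ν) := by
    simp [fromBlocks_mul_fromRows, fromRows_mul, mul_muBlock_mul_one_kronecker_transpose ν hμ]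
  have h21 : ((1 : Matrix (Fin m) (Fin m) ℝ) ⊗ₖ V) *
      fromCols (0 : Matrix (Fin m × Fin n) (Fin n) ℝ) (muBlock μ ν)ᵀ *
      (fromBlocks U 0 0 U : Matrix (Fin n ⊕ Fin n) (Fin n ⊕ Fin n) ℝ)ᵀ =
      fromCols 0 (muBlock μ' ν)ᵀ := by
    simpa [transpose_mul, transpose_fromRows, Matrix.mul_assoc] using congrArg transpose h12
  rw [coronaTransform, coronaStar, coronaStar, fromBlocks_diag_mul_fromBlocks_mul_transpose,
    fromBlocks_diag_mul_fromBlocks_mul_transpose, h12, h21]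
  simp [hA, ← kroneckerMap_transpose, ← mul_kronecker_mul, hV]

theorem coronaTransform_mul_degree_mul_transpose {U V : Matrix (Fin n) (Fin n) ℝ}
    (hU : U * Uᵀ = 1) (hV : V * Vᵀ = 1) (a b : ℝ) (D : Matrix (Fin m) (Fin m) ℝ) :
    coronaTransform m U V * fromBlocks (fromBlocks (a • 1) 0 0 (b • 1)) 0 0 (D ⊗ₖ 1) *
      (coronaTransform m U V)ᵀ = fromBlocks (fromBlocks (a • 1) 0 0 (b • 1)) 0 0 (D ⊗ₖ 1) := by
  simp [coronaTransform, fromBlocks_diag_mul_fromBlocks_mul_transpose, ← kroneckerMap_transpose,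
    ← mul_kronecker_mul, hU, hV]

end Corona

theorem charpoly_laplacian_coronaStar_eq_of_orthogonal_conj {n m : ℕ} {r : ℝ}
    {U A A' : Matrix (Fin n) (Fin n) ℝ} {μ μ' : Fin n → ℝ} (B : Matrix (Fin m) (Fin m) ℝ)
    {ν : Fin m → ℝ} (hU : U * Uᵀ = 1) (hUA : U * A * Uᵀ = A')
    (hA : ∀ i, ∑ j, |A i j| = r) (hA' : ∀ i, ∑ j, |A' i j| = r)
    (hμ : ∀ i, |μ i| = 1) (hμ' : ∀ i, |μ' i| = 1) (hν : ∀ j, |ν j| = 1) :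
    (degMat (coronaStar A B μ ν) - coronaStar A B μ ν).charpoly =
      (degMat (coronaStar A' B μ' ν) - coronaStar A' B μ' ν).charpoly := by
  set V := diagonal μ' * U * diagonal μ
  have hVt : Vᵀ = diagonal μ * Uᵀ * diagonal μ' := by
    simp only [V, transpose_mul, diagonal_transpose, Matrix.mul_assoc]
  have hUV : U * diagonal μ * Vᵀ = diagonal μ' := by
    rw [hVt, Matrix.mul_assoc, ← Matrix.mul_assoc (diagonal μ), ← Matrix.mul_assoc (diagonal μ),
      diagonal_mul_diagonal_self_of_abs_eq_one hμ, Matrix.one_mul, ← Matrix.mul_assoc, hU,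
      Matrix.one_mul]
  have hV : V * Vᵀ = 1 :=
    calc V * Vᵀ = diagonal μ' * (U * diagonal μ * Vᵀ) := by simp only [V, Matrix.mul_assoc]
      _ = 1 := by rw [hUV, diagonal_mul_diagonal_self_of_abs_eq_one hμ']
  rw [degMat_coronaStar_s14 B hA hμ hν, degMat_coronaStar_s14 B hA' hμ' hν,
    ← charpoly_mul_mul_eq_of_mul_eq_one _ (coronaTransform_mul_transpose (m := m) hU hV),
    Matrix.mul_sub, Matrix.sub_mul, coronaTransform_mul_degree_mul_transpose hU hV,
    coronaTransform_mul_coronaStar_mul_transpose B ν hUA hUV hV]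

theorem corona_L_cospectral_left_general (n : ℕ) (r : ℝ)
    (A1 : Matrix (Fin n) (Fin n) ℝ) (hA1sym : A1.IsSymm)
    (μ1 : Fin n → ℝ) (hμ1 : ∀ i, μ1 i = 1 ∨ μ1 i = -1)
    (hreg1 : ∀ i, ∑ j, |A1 i j| = r)
    (A2 : Matrix (Fin n) (Fin n) ℝ) (hA2sym : A2.IsSymm)
    (μ2 : Fin n → ℝ) (hμ2 : ∀ i, μ2 i = 1 ∨ μ2 i = -1)
    (hreg2 : ∀ i, ∑ j, |A2 i j| = r)
    (hcospec : (Matrix.diagonal μ1 * A1.map abs * Matrix.diagonal μ1).charpoly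
      = (Matrix.diagonal μ2 * A2.map abs * Matrix.diagonal μ2).charpoly)
    (m : ℕ) (B : Matrix (Fin m) (Fin m) ℝ)
    (ν : Fin m → ℝ) (hν : ∀ i, ν i = 1 ∨ ν i = -1) :
    (degMat (coronaStar (Matrix.diagonal μ1 * A1.map abs * Matrix.diagonal μ1) B μ1 ν)
        - coronaStar (Matrix.diagonal μ1 * A1.map abs * Matrix.diagonal μ1) B μ1 ν).charpoly
      = (degMat (coronaStar (Matrix.diagonal μ2 * A2.map abs * Matrix.diagonal μ2) B μ2 ν)
        - coronaStar (Matrix.diagonal μ2 * A2.map abs * Matrix.diagonal μ2) B μ2 ν).charpoly := by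
  have habs : ∀ {k : ℕ} {x : Fin k → ℝ}, (∀ i, x i = 1 ∨ x i = -1) → ∀ i, |x i| = 1 :=
    fun hx i => (abs_eq zero_le_one).mpr (hx i)
  obtain ⟨U, hU, hUA⟩ :=
    (hA1sym.diagonal_mul_map_abs_mul_diagonal μ1).exists_orthogonal_conj_eq_of_charpoly_eq
      (hA2sym.diagonal_mul_map_abs_mul_diagonal μ2) hcospec
  exact charpoly_laplacian_coronaStar_eq_of_orthogonal_conj B hU hUA
    (fun i => (sum_abs_diagonal_mul_map_abs_mul_diagonal A1 (habs hμ1) i).trans (hreg1 i))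
    (fun i => (sum_abs_diagonal_mul_map_abs_mul_diagonal A2 (habs hμ2) i).trans (hreg2 i))
    (habs hμ1) (habs hμ2) (habs hν)

/-- If `Γ₁, Γ₂` are `r`-regular of the same order `n` and their `μ`-signed
adjacency matrices are cospectral, then for every signed graph `Γ`, `Γ₁⊛Γ` and `Γ₂⊛Γ` are
Laplacian cospectral. -/
theorem corona_L_cospectral_left (n : ℕ) (r : ℝ)
    (A1 : Matrix (Fin n) (Fin n) ℝ) (hA1sym : A1.IsSymm) (hA1diag : ∀ i, A1 i i = 0)
    (hA1ent : ∀ i j, A1 i j = 1 ∨ A1 i j = 0 ∨ A1 i j = -1)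
    (μ1 : Fin n → ℝ) (hμ1 : ∀ i, μ1 i = 1 ∨ μ1 i = -1)
    (hreg1 : ∀ i, ∑ j, |A1 i j| = r)
    (A2 : Matrix (Fin n) (Fin n) ℝ) (hA2sym : A2.IsSymm) (hA2diag : ∀ i, A2 i i = 0)
    (hA2ent : ∀ i j, A2 i j = 1 ∨ A2 i j = 0 ∨ A2 i j = -1)
    (μ2 : Fin n → ℝ) (hμ2 : ∀ i, μ2 i = 1 ∨ μ2 i = -1)
    (hreg2 : ∀ i, ∑ j, |A2 i j| = r)
    (hcospec : (Matrix.diagonal μ1 * A1.map abs * Matrix.diagonal μ1).charpoly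
      = (Matrix.diagonal μ2 * A2.map abs * Matrix.diagonal μ2).charpoly)
    (m : ℕ) (B : Matrix (Fin m) (Fin m) ℝ) (hBsym : B.IsSymm) (hBdiag : ∀ i, B i i = 0)
    (hBent : ∀ i j, B i j = 1 ∨ B i j = 0 ∨ B i j = -1)
    (ν : Fin m → ℝ) (hν : ∀ i, ν i = 1 ∨ ν i = -1) :
    (degMat (coronaStar (Matrix.diagonal μ1 * A1.map abs * Matrix.diagonal μ1) B μ1 ν)
        - coronaStar (Matrix.diagonal μ1 * A1.map abs * Matrix.diagonal μ1) B μ1 ν).charpoly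
      = (degMat (coronaStar (Matrix.diagonal μ2 * A2.map abs * Matrix.diagonal μ2) B μ2 ν)
        - coronaStar (Matrix.diagonal μ2 * A2.map abs * Matrix.diagonal μ2) B μ2 ν).charpoly :=
  corona_L_cospectral_left_general n r A1 hA1sym μ1 hμ1 hreg1 A2 hA2sym μ2 hμ2 hreg2 hcospec m B ν
    hν
end

section
/- Let Γ1 and Γ2 be r-regular signed graphs of the same order n with adjacency matrices A1, A2 and markings μ1, μ2 such that the μ-signed adjacency matrices Φ1·|A1|·Φ1 and Φ2·|A2|·Φ2 have the same characteristic polynomial. Then for every signed graph Γ (with marking), the signless Laplacian matrices Q(Γ1⊛Γ) and Q(Γ2⊛Γ) have the same characteristic polynomial, i.e., Γ1⊛Γ and Γ2⊛Γ are signless Laplacian cospectral. -/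
open Matrix Kronecker BigOperators

/-!
Switching by `diag(μ, μ, 1)` turns `Γᵢ ⊛ Γ` into the corona of `|Aᵢ|` with the all-ones marking
and leaves its signless Laplacian spectrum unchanged. By `r`-regularity both of these coronas have
the same diagonal degree matrix. The symmetric matrices `|A₁|`, `|A₂|` are cospectral, hence
similar via some `W` (diagonalize both by orthogonal matrices); then `diag(W, W, I ⊗ W)` commutes
with that degree matrix and conjugates one corona adjacency matrix into the other.
-/

section Similarity

variable {n : Type*} [Fintype n] [DecidableEq n]

theorem Matrix.charpoly_eq_of_isUnit_of_mul_eq_mul {R : Type*} [CommRing R]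
    {M N P : Matrix n n R} (hP : IsUnit P) (h : P * N = M * P) : M.charpoly = N.charpoly := by
  obtain ⟨u, rfl⟩ := hP
  have hM : M = u.val * N * u⁻¹.val := by rw [h, mul_assoc, Units.mul_inv, mul_one]
  rw [hM, charpoly_mul_comm, ← mul_assoc, Units.inv_mul, one_mul]

theorem Matrix.charpoly_diagonal_mul_mul_diagonal {R : Type*} [CommRing R] {w : n → R}
    (hw : ∀ i, w i * w i = 1) (M : Matrix n n R) :
    (diagonal w * M * diagonal w).charpoly = M.charpoly := by
  rw [charpoly_mul_comm, ← mul_assoc, diagonal_mul_diagonal, funext hw]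
  simp

theorem Matrix.IsHermitian.exists_isUnit_mul_eq_mul_of_charpoly_eq {𝕜 : Type*} [RCLike 𝕜]
    {A B : Matrix n n 𝕜} (hA : A.IsHermitian) (hB : B.IsHermitian)
    (h : A.charpoly = B.charpoly) : ∃ P, IsUnit P ∧ P * B = A * P := by
  set U := hA.eigenvectorUnitary
  set V := hB.eigenvectorUnitary
  set D : Matrix n n 𝕜 := diagonal (RCLike.ofReal ∘ hA.eigenvalues) with hD
  have hAD : A = U * D * star (U : Matrix n n 𝕜) := hA.spectral_theorem
  have hBD : B = V * D * star (V : Matrix n n 𝕜) := by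
    rw [hD, (hA.eigenvalues_eq_eigenvalues_iff hB).2 h]
    exact hB.spectral_theorem
  refine ⟨U * star (V : Matrix n n 𝕜), Unitary.isUnit_coe (U := U * star V), ?_⟩
  calc U * star (V : Matrix n n 𝕜) * B
      = U * (star (V : Matrix n n 𝕜) * V) * D * star (V : Matrix n n 𝕜) := by
        rw [hBD]; simp only [mul_assoc]
    _ = U * D * star (U : Matrix n n 𝕜) * (U * star (V : Matrix n n 𝕜)) := by
        rw [Unitary.coe_star_mul_self, mul_assoc (U * D), ← mul_assoc (star _),
          Unitary.coe_star_mul_self]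
        simp only [mul_one, one_mul, mul_assoc]
    _ = A * (U * star (V : Matrix n n 𝕜)) := by rw [← hAD]

end Similarity

section Switching

variable {V : Type} [Fintype V] [DecidableEq V]

noncomputable def signlessLaplacian (X : Matrix V V ℝ) : Matrix V V ℝ :=
  degMat X + X

theorem degMat_diagonal_mul_mul_diagonal {w : V → ℝ} (hw : ∀ i, |w i| = 1)
    (X : Matrix V V ℝ) : degMat (diagonal w * X * diagonal w) = degMat X := by
  simp [degMat, diagonal_mul, mul_diagonal, abs_mul, hw]

theorem signlessLaplacian_diagonal_mul_mul_diagonal {w : V → ℝ} (hw : ∀ i, |w i| = 1)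
    (X : Matrix V V ℝ) :
    signlessLaplacian (diagonal w * X * diagonal w)
      = diagonal w * signlessLaplacian X * diagonal w := by
  have hdeg : diagonal w * degMat X * diagonal w = degMat X := by
    simp only [degMat, diagonal_mul_diagonal]
    congr 1
    ext i
    rw [mul_comm, ← mul_assoc, ← abs_mul_abs_self, hw, one_mul, one_mul]
  rw [signlessLaplacian, signlessLaplacian, degMat_diagonal_mul_mul_diagonal hw, mul_add,
    add_mul, hdeg]

theorem charpoly_signlessLaplacian_diagonal_mul_mul_diagonal {w : V → ℝ}
    (hw : ∀ i, |w i| = 1) (X : Matrix V V ℝ) :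
    (signlessLaplacian (diagonal w * X * diagonal w)).charpoly
      = (signlessLaplacian X).charpoly := by
  rw [signlessLaplacian_diagonal_mul_mul_diagonal hw,
    charpoly_diagonal_mul_mul_diagonal fun i => by rw [← abs_mul_abs_self, hw, one_mul]]

end Switching

section Corona

variable {n m : ℕ}

def coronaSign (m : ℕ) (μ : Fin n → ℝ) : (Fin n ⊕ Fin n) ⊕ Fin m × Fin n → ℝ :=
  Sum.elim (Sum.elim μ μ) fun _ => 1

theorem abs_coronaSign {μ : Fin n → ℝ} (hμ : ∀ i, |μ i| = 1)
    (a : (Fin n ⊕ Fin n) ⊕ Fin m × Fin n) : |coronaSign m μ a| = 1 := by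
  rcases a with (i | i) | p <;> simp [coronaSign, hμ]

theorem coronaStar_diagonal_mul_mul_diagonal_s17 (M : Matrix (Fin n) (Fin n) ℝ)
    (B : Matrix (Fin m) (Fin m) ℝ) (μ : Fin n → ℝ) (ν : Fin m → ℝ) :
    coronaStar (diagonal μ * M * diagonal μ) B μ ν
      = diagonal (coronaSign m μ) * coronaStar M B (fun _ => 1) ν
        * diagonal (coronaSign m μ) := by
  ext a b
  rw [mul_diagonal, diagonal_mul]
  rcases a with (i | i) | ⟨k, i⟩ <;> rcases b with (j | j) | ⟨l, j⟩ <;>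
    simp [coronaStar, muBlock, coronaSign, diagonal_apply, one_apply, mul_comm]

def coronaDegree (r : ℝ) (B : Matrix (Fin m) (Fin m) ℝ) (ν : Fin m → ℝ) :
    (Fin n ⊕ Fin n) ⊕ Fin m × Fin n → ℝ :=
  Sum.elim (Sum.elim (fun _ => r) fun _ => r + ∑ k, |ν k|) fun p => |ν p.1| + ∑ l, |B p.1 l|

theorem degMat_coronaStar_s17 {r : ℝ} {M : Matrix (Fin n) (Fin n) ℝ} (hM : ∀ i, ∑ j, |M i j| = r)
    (B : Matrix (Fin m) (Fin m) ℝ) (ν : Fin m → ℝ) :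
    degMat (coronaStar M B (fun _ => 1) ν) = diagonal (coronaDegree r B ν) := by
  refine congrArg diagonal (funext fun a => ?_)
  rcases a with (i | i) | ⟨k, i⟩ <;>
    simp [coronaStar, muBlock, coronaDegree, Fintype.sum_sum_type, Fintype.sum_prod_type,
      diagonal_apply, one_apply, apply_ite abs, hM]

def coronaBlockDiag (m : ℕ) (W : Matrix (Fin n) (Fin n) ℝ) :
    Matrix ((Fin n ⊕ Fin n) ⊕ Fin m × Fin n) ((Fin n ⊕ Fin n) ⊕ Fin m × Fin n) ℝ :=
  fromBlocks (fromBlocks W 0 0 W) 0 0 ((1 : Matrix (Fin m) (Fin m) ℝ) ⊗ₖ W)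

theorem isUnit_coronaBlockDiag {W : Matrix (Fin n) (Fin n) ℝ} (hW : IsUnit W) :
    IsUnit (coronaBlockDiag m W) := by
  rw [isUnit_iff_isUnit_det] at hW ⊢
  rw [coronaBlockDiag, det_fromBlocks_zero₂₁, det_fromBlocks_zero₂₁, det_kronecker, det_one,
    one_pow, one_mul]
  exact (hW.mul hW).mul (hW.pow _)

theorem commute_coronaBlockDiag_diagonal_coronaDegree (W : Matrix (Fin n) (Fin n) ℝ) (r : ℝ)
    (B : Matrix (Fin m) (Fin m) ℝ) (ν : Fin m → ℝ) :
    Commute (coronaBlockDiag m W) (diagonal (coronaDegree r B ν)) := by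
  ext a b
  rw [mul_diagonal, diagonal_mul]
  rcases a with (i | i) | ⟨k, i⟩ <;> rcases b with (j | j) | ⟨l, j⟩ <;>
    simp [coronaBlockDiag, coronaDegree, one_apply, mul_comm]
  by_cases hkl : k = l <;> simp [hkl]

-- The binder type `Fin n` fixes the dimensions before `*` is elaborated; without it the
-- default instance picks the `CStarMatrix` product.
theorem mul_muBlock_one (W : Matrix (Fin n) (Fin n) ℝ) (ν : Fin m → ℝ) :
    W * muBlock (fun _ : Fin n => 1) ν
      = muBlock (fun _ : Fin n => 1) ν * ((1 : Matrix (Fin m) (Fin m) ℝ) ⊗ₖ W) := by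
  ext i ⟨k, j⟩
  simp [mul_apply, muBlock, Fintype.sum_prod_type, diagonal_apply, one_apply, mul_comm]

theorem kronecker_one_mul_transpose_muBlock_one (W : Matrix (Fin n) (Fin n) ℝ) (ν : Fin m → ℝ) :
    ((1 : Matrix (Fin m) (Fin m) ℝ) ⊗ₖ W) * (muBlock (fun _ : Fin n => 1) ν)ᵀ
      = (muBlock (fun _ : Fin n => 1) ν)ᵀ * W := by
  ext ⟨k, i⟩ j
  simp [mul_apply, muBlock, Fintype.sum_prod_type, diagonal_apply, one_apply, mul_comm]

theorem coronaBlockDiag_mul_coronaStar {W M₁ M₂ : Matrix (Fin n) (Fin n) ℝ}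
    (hW : W * M₂ = M₁ * W) (B : Matrix (Fin m) (Fin m) ℝ) (ν : Fin m → ℝ) :
    coronaBlockDiag m W * coronaStar M₂ B (fun _ => 1) ν
      = coronaStar M₁ B (fun _ => 1) ν * coronaBlockDiag m W := by
  have hkron : ((1 : Matrix (Fin m) (Fin m) ℝ) ⊗ₖ W) * (B ⊗ₖ (1 : Matrix (Fin n) (Fin n) ℝ))
      = (B ⊗ₖ (1 : Matrix (Fin n) (Fin n) ℝ)) * ((1 : Matrix (Fin m) (Fin m) ℝ) ⊗ₖ W) := by
    rw [← mul_kronecker_mul, ← mul_kronecker_mul, one_mul, mul_one, one_mul, mul_one]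
  simp only [coronaBlockDiag, coronaStar, fromBlocks_multiply, fromBlocks_mul_fromRows,
    fromRows_mul, mul_fromCols, fromCols_mul_fromBlocks, mul_muBlock_one,
    kronecker_one_mul_transpose_muBlock_one, hW, hkron, Matrix.mul_zero, Matrix.zero_mul, add_zero,
    zero_add]

end Corona

theorem corona_Q_cospectral_left_general (n : ℕ) (r : ℝ)
    (A1 : Matrix (Fin n) (Fin n) ℝ) (hA1sym : A1.IsSymm)
    (μ1 : Fin n → ℝ) (hμ1 : ∀ i, μ1 i = 1 ∨ μ1 i = -1)
    (hreg1 : ∀ i, ∑ j, |A1 i j| = r)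
    (A2 : Matrix (Fin n) (Fin n) ℝ) (hA2sym : A2.IsSymm)
    (μ2 : Fin n → ℝ) (hμ2 : ∀ i, μ2 i = 1 ∨ μ2 i = -1)
    (hreg2 : ∀ i, ∑ j, |A2 i j| = r)
    (hcospec : (Matrix.diagonal μ1 * A1.map abs * Matrix.diagonal μ1).charpoly
      = (Matrix.diagonal μ2 * A2.map abs * Matrix.diagonal μ2).charpoly)
    (m : ℕ) (B : Matrix (Fin m) (Fin m) ℝ)
    (ν : Fin m → ℝ) :
    (degMat (coronaStar (Matrix.diagonal μ1 * A1.map abs * Matrix.diagonal μ1) B μ1 ν)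
        + coronaStar (Matrix.diagonal μ1 * A1.map abs * Matrix.diagonal μ1) B μ1 ν).charpoly
      = (degMat (coronaStar (Matrix.diagonal μ2 * A2.map abs * Matrix.diagonal μ2) B μ2 ν)
        + coronaStar (Matrix.diagonal μ2 * A2.map abs * Matrix.diagonal μ2) B μ2 ν).charpoly := by
  have habs1 : ∀ i, |μ1 i| = 1 := fun i => by rcases hμ1 i with h | h <;> simp [h]
  have habs2 : ∀ i, |μ2 i| = 1 := fun i => by rcases hμ2 i with h | h <;> simp [h]
  have hsq1 : ∀ i, μ1 i * μ1 i = 1 := fun i => by rw [← abs_mul_abs_self, habs1, one_mul]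
  have hsq2 : ∀ i, μ2 i * μ2 i = 1 := fun i => by rw [← abs_mul_abs_self, habs2, one_mul]
  have hreg1' : ∀ i, ∑ j, |A1.map abs i j| = r := by simpa using hreg1
  have hreg2' : ∀ i, ∑ j, |A2.map abs i j| = r := by simpa using hreg2
  obtain ⟨W, hW, hWA⟩ :=
    (isHermitian_iff_isSymm.2 (hA1sym.map abs)).exists_isUnit_mul_eq_mul_of_charpoly_eq
      (isHermitian_iff_isSymm.2 (hA2sym.map abs)) (by
        rwa [charpoly_diagonal_mul_mul_diagonal hsq1, charpoly_diagonal_mul_mul_diagonal hsq2]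
          at hcospec)
  change (signlessLaplacian _).charpoly = (signlessLaplacian _).charpoly
  rw [coronaStar_diagonal_mul_mul_diagonal_s17, coronaStar_diagonal_mul_mul_diagonal_s17,
    charpoly_signlessLaplacian_diagonal_mul_mul_diagonal (abs_coronaSign habs1),
    charpoly_signlessLaplacian_diagonal_mul_mul_diagonal (abs_coronaSign habs2)]
  refine charpoly_eq_of_isUnit_of_mul_eq_mul (isUnit_coronaBlockDiag hW) ?_
  rw [signlessLaplacian, signlessLaplacian, degMat_coronaStar_s17 hreg1', degMat_coronaStar_s17 hreg2',
    mul_add, add_mul, coronaBlockDiag_mul_coronaStar hWA,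
    (commute_coronaBlockDiag_diagonal_coronaDegree W r B ν).eq]

/-- If `Γ₁, Γ₂` are `r`-regular of the same order `n` and their `μ`-signed
adjacency matrices are cospectral, then for every signed graph `Γ`, `Γ₁⊛Γ` and `Γ₂⊛Γ` are
signless Laplacian cospectral. -/
theorem corona_Q_cospectral_left (n : ℕ) (r : ℝ)
    (A1 : Matrix (Fin n) (Fin n) ℝ) (hA1sym : A1.IsSymm) (hA1diag : ∀ i, A1 i i = 0)
    (hA1ent : ∀ i j, A1 i j = 1 ∨ A1 i j = 0 ∨ A1 i j = -1)
    (μ1 : Fin n → ℝ) (hμ1 : ∀ i, μ1 i = 1 ∨ μ1 i = -1)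
    (hreg1 : ∀ i, ∑ j, |A1 i j| = r)
    (A2 : Matrix (Fin n) (Fin n) ℝ) (hA2sym : A2.IsSymm) (hA2diag : ∀ i, A2 i i = 0)
    (hA2ent : ∀ i j, A2 i j = 1 ∨ A2 i j = 0 ∨ A2 i j = -1)
    (μ2 : Fin n → ℝ) (hμ2 : ∀ i, μ2 i = 1 ∨ μ2 i = -1)
    (hreg2 : ∀ i, ∑ j, |A2 i j| = r)
    (hcospec : (Matrix.diagonal μ1 * A1.map abs * Matrix.diagonal μ1).charpoly
      = (Matrix.diagonal μ2 * A2.map abs * Matrix.diagonal μ2).charpoly)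
    (m : ℕ) (B : Matrix (Fin m) (Fin m) ℝ) (hBsym : B.IsSymm) (hBdiag : ∀ i, B i i = 0)
    (hBent : ∀ i j, B i j = 1 ∨ B i j = 0 ∨ B i j = -1)
    (ν : Fin m → ℝ) (hν : ∀ i, ν i = 1 ∨ ν i = -1) :
    (degMat (coronaStar (Matrix.diagonal μ1 * A1.map abs * Matrix.diagonal μ1) B μ1 ν)
        + coronaStar (Matrix.diagonal μ1 * A1.map abs * Matrix.diagonal μ1) B μ1 ν).charpoly
      = (degMat (coronaStar (Matrix.diagonal μ2 * A2.map abs * Matrix.diagonal μ2) B μ2 ν)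
        + coronaStar (Matrix.diagonal μ2 * A2.map abs * Matrix.diagonal μ2) B μ2 ν).charpoly :=
  corona_Q_cospectral_left_general n r A1 hA1sym μ1 hμ1 hreg1 A2 hA2sym μ2 hμ2 hreg2 hcospec m B ν
end
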